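/- arXiv:2501.02571 — 4 statements merged into one kernel-verified Lean document; each statement's English description precedes it below -/
import Mathlib

section
/- (Kochen–Stone) Let $(E_n)_{n\geq 1}$ be events on a probability space with $\sum_n \mathbb{P}(E_n)=\infty$. Then $\mathbb{P}(\limsup_n E_n) \geq \limsup_{N\to\infty} \frac{(\sum_{n=1}^N \mathbb{P}(E_n))^2}{\sum_{n,m=1}^N \mathbb{P}(E_n\cap E_m)}$. In particular, if there is a constant $C<\infty$ with $\mathbb{P}(E_n\cap E_m)\leq C\,\mathbb{P}(E_n)\mathbb{P}(E_m)$ for all $n\neq m$, and $\sum_n \mathbb{P}(E_n)=\infty$, then $\mathbb{P}(\limsup_n E_n)\geq 1/C>0$. -/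
open MeasureTheory Filter Finset
open scoped ENNReal NNReal Topology

lemma ks_cs {Ω : Type*} [MeasurableSpace Ω] (μ : Measure Ω) (E : ℕ → Set Ω)
    (hmeas : ∀ n, MeasurableSet (E n)) (s : Finset ℕ) :
    (∑ n ∈ s, μ (E n)) ^ 2 ≤
      μ (⋃ n ∈ s, E n) * ∑ n ∈ s, ∑ m ∈ s, μ (E n ∩ E m) := by
  set f : Ω → ℝ≥0∞ := fun ω => ∑ n ∈ s, (E n).indicator 1 ω with hfdef
  set A : Set Ω := ⋃ n ∈ s, E n with hA
  set g : Ω → ℝ≥0∞ := A.indicator 1 with hgdef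
  have hAm : MeasurableSet A := s.measurableSet_biUnion (fun n _ => hmeas n)
  have hfm : Measurable f := Finset.measurable_sum s fun n _ => measurable_one.indicator (hmeas n)
  have h1 : ∫⁻ ω, f ω ∂μ = ∑ n ∈ s, μ (E n) := by
    rw [lintegral_finset_sum _ fun n _ => measurable_one.indicator (hmeas n)]
    exact Finset.sum_congr rfl fun n _ => lintegral_indicator_one (hmeas n)
  have h2 : ∫⁻ ω, f ω ^ (2 : ℝ) ∂μ = ∑ n ∈ s, ∑ m ∈ s, μ (E n ∩ E m) := by
    have hpt : ∀ ω, f ω ^ (2 : ℝ) = ∑ n ∈ s, ∑ m ∈ s, (E n ∩ E m).indicator (1 : Ω → ℝ≥0∞) ω := by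
      intro ω
      rw [show ((2:ℝ)) = ((2:ℕ):ℝ) by norm_num, ENNReal.rpow_natCast, sq, hfdef]
      simp only
      rw [Finset.sum_mul_sum]
      refine Finset.sum_congr rfl fun n _ => Finset.sum_congr rfl fun m _ => ?_
      rw [Set.inter_indicator_one, Pi.mul_apply]
    simp_rw [hpt]
    rw [lintegral_finset_sum _ fun n _ =>
      Finset.measurable_sum s fun m _ => measurable_one.indicator ((hmeas n).inter (hmeas m))]
    refine Finset.sum_congr rfl fun n _ => ?_
    rw [lintegral_finset_sum _ fun m _ => measurable_one.indicator ((hmeas n).inter (hmeas m))]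
    exact Finset.sum_congr rfl fun m _ => lintegral_indicator_one ((hmeas n).inter (hmeas m))
  have hfg : ∫⁻ ω, (f * g) ω ∂μ = ∫⁻ ω, f ω ∂μ := by
    refine lintegral_congr fun ω => ?_
    rw [Pi.mul_apply]
    by_cases hω : ω ∈ A
    · rw [hgdef, Set.indicator_of_mem hω, Pi.one_apply, mul_one]
    · have hf0 : f ω = 0 := by
        refine Finset.sum_eq_zero fun n hn => ?_
        have : ω ∉ E n := fun h => hω (Set.mem_biUnion hn h)
        simp [Set.indicator_of_notMem this]
      rw [hf0, zero_mul]
  have hcs := ENNReal.lintegral_mul_le_Lp_mul_Lq μ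
    (Real.HolderConjugate.two_two) hfm.aemeasurable
    ((measurable_one.indicator hAm) : Measurable g).aemeasurable (f := f) (g := g)
  rw [hfg, h1] at hcs
  have hind : ∫⁻ ω, g ω ^ (2 : ℝ) ∂μ = μ A := by
    have : ∀ ω, g ω ^ (2 : ℝ) = g ω := by
      intro ω
      by_cases hω : ω ∈ A <;>
        simp [hgdef, Set.indicator_of_mem, Set.indicator_of_notMem, hω, ENNReal.zero_rpow_of_pos]
    simp_rw [this]
    exact lintegral_indicator_one hAm
  rw [hind] at hcs
  calc (∑ n ∈ s, μ (E n)) ^ 2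
      ≤ ((∫⁻ ω, f ω ^ (2:ℝ) ∂μ) ^ (1/2:ℝ) * μ A ^ (1/2:ℝ)) ^ 2 := by
        exact pow_le_pow_left' hcs 2
    _ = μ A * ∑ n ∈ s, ∑ m ∈ s, μ (E n ∩ E m) := by
        have hsq : ∀ x : ℝ≥0∞, (x ^ (1/2:ℝ)) ^ 2 = x := fun x => by
          rw [← ENNReal.rpow_natCast (x ^ (1/2:ℝ)) 2, ← ENNReal.rpow_mul]; norm_num
        rw [mul_pow, hsq, hsq, h2, mul_comm]

theorem stmt4 {Ω : Type*} [MeasurableSpace Ω] (μ : Measure Ω)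
    [IsProbabilityMeasure μ]
    (E : ℕ → Set Ω) (hmeas : ∀ n, MeasurableSet (E n))
    (hdiv : ∑' n : ℕ, μ (E (n + 1)) = ⊤) :
    -- Kochen–Stone inequality (events are indexed by `n ≥ 1`):
    (Filter.limsup (fun N : ℕ =>
        (∑ n ∈ Finset.Icc 1 N, μ (E n)) ^ 2 /
          ∑ n ∈ Finset.Icc 1 N, ∑ m ∈ Finset.Icc 1 N, μ (E n ∩ E m))
        Filter.atTop)
      ≤ μ (Filter.limsup E Filter.atTop) ∧
    -- In particular, under the pairwise correlation bound:
    (∀ C : ℝ≥0∞, C < ⊤ →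
      (∀ n m : ℕ, 1 ≤ n → 1 ≤ m → n ≠ m → μ (E n ∩ E m) ≤ C * μ (E n) * μ (E m)) →
      1 / C ≤ μ (Filter.limsup E Filter.atTop) ∧ 0 < 1 / C) := by
  set a : ℕ → ℝ≥0∞ := fun N => ∑ n ∈ Finset.Icc 1 N, μ (E n) with ha
  set b : ℕ → ℝ≥0∞ := fun N => ∑ n ∈ Finset.Icc 1 N, ∑ m ∈ Finset.Icc 1 N, μ (E n ∩ E m) with hb
  have ha_ne_top : ∀ N, a N ≠ ⊤ := fun N =>
    (ENNReal.sum_lt_top.mpr fun n _ => measure_lt_top μ _).ne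
  have hb_ne_top : ∀ N, b N ≠ ⊤ := fun N =>
    (ENNReal.sum_lt_top.mpr fun n _ =>
      ENNReal.sum_lt_top.mpr fun m _ => measure_lt_top μ _).ne
  -- `a` tends to infinity
  have hatop : Tendsto a atTop (𝓝 ⊤) := by
    have hrw : ∀ N, a N = ∑ i ∈ Finset.range N, μ (E (i + 1)) := by
      intro N
      rw [ha]
      simp only
      rw [show Finset.Icc 1 N = Finset.Ico 1 (N + 1) by rw [Finset.Ico_add_one_right_eq_Icc],
        Finset.sum_Ico_eq_sum_range]
      simp [add_comm]
    have := ENNReal.tendsto_nat_tsum fun i => μ (E (i + 1))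
    rw [hdiv] at this
    exact (funext hrw : a = _) ▸ this
  have hev : ∀ c : ℝ≥0∞, c ≠ ⊤ → ∀ᶠ N in atTop, c ≤ a N := by
    intro c hc
    rw [ENNReal.tendsto_nhds_top_iff_nnreal] at hatop
    filter_upwards [hatop c.toNNReal] with N hN
    exact le_of_lt (by rwa [ENNReal.coe_toNNReal hc] at hN)
  -- the tail unions
  set V : ℕ → Set Ω := fun k => ⋃ n, ⋃ (_ : k ≤ n), E n with hV
  have hVm : ∀ k, MeasurableSet (V k) := fun k =>
    MeasurableSet.iUnion fun n => MeasurableSet.iUnion fun _ => hmeas n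
  have hVanti : Antitone V := fun i j hij =>
    Set.iUnion₂_mono' fun n hn => ⟨n, hij.trans hn, subset_rfl⟩
  have hset : Filter.limsup E Filter.atTop = ⋂ k, V k := by
    rw [limsup_eq_iInf_iSup_of_nat]
    simp only [hV, Set.iInf_eq_iInter, Set.iSup_eq_iUnion]
  have hmeaslim : μ (Filter.limsup E Filter.atTop) = ⨅ k, μ (V k) := by
    rw [hset]
    exact Directed.measure_iInter (fun k => (hVm k).nullMeasurableSet)
      hVanti.directed_ge ⟨0, measure_ne_top μ _⟩
  -- splitting of sums
  have hsplit : ∀ k N, k ≤ N → a k + ∑ n ∈ Finset.Ioc k N, μ (E n) = a N := by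
    intro k N hkN
    rw [ha]
    simp only
    rw [show Finset.Icc 1 k = Finset.Ioc 0 k from Finset.Icc_add_one_left_eq_Ioc 0 k,
      show Finset.Icc 1 N = Finset.Ioc 0 N from Finset.Icc_add_one_left_eq_Ioc 0 N]
    exact Finset.sum_Ioc_consecutive _ (Nat.zero_le k) hkN
  -- key bound for each k and each η > 1
  have bound' : ∀ k, Filter.limsup (fun N : ℕ => a N ^ 2 / b N) atTop ≤ μ (V (k + 1)) := by
    intro k
    have hkey : ∀ η : ℝ≥0∞, 1 < η → η ≠ ⊤ →
        Filter.limsup (fun N : ℕ => a N ^ 2 / b N) atTop ≤ η ^ 2 * μ (V (k + 1)) := by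
      intro η hη1 hηt
      have hη0 : η ≠ 0 := (zero_lt_one.trans hη1).ne'
      have hinvlt : η⁻¹ < 1 := ENNReal.inv_lt_one.mpr hη1
      have hfac_ne : (1 - η⁻¹) ≠ 0 := by
        simp only [ne_eq, tsub_eq_zero_iff_le, not_le]
        exact hinvlt
      have hd_ne_top : (1 - η⁻¹)⁻¹ * a k ≠ ⊤ :=
        ENNReal.mul_ne_top (ENNReal.inv_ne_top.mpr hfac_ne) (ha_ne_top k)
      refine Filter.limsup_le_of_le (by isBoundedDefault) ?_
      filter_upwards [hev _ hd_ne_top, Filter.eventually_ge_atTop k] with N hdN hkN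
      -- notation for the tail pieces
      set a' : ℝ≥0∞ := ∑ n ∈ Finset.Ioc k N, μ (E n) with ha'
      set b' : ℝ≥0∞ := ∑ n ∈ Finset.Ioc k N, ∑ m ∈ Finset.Ioc k N, μ (E n ∩ E m) with hb'
      -- Cauchy-Schwarz on the tail
      have hCS := ks_cs μ E hmeas (Finset.Ioc k N)
      have hsub : (⋃ n ∈ Finset.Ioc k N, E n) ⊆ V (k + 1) := by
        refine Set.iUnion₂_subset fun n hn => ?_
        exact Set.subset_iUnion₂ (s := fun n _ => E n) n (Finset.mem_Ioc.mp hn).1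
      have hb'b : b' ≤ b N := by
        rw [hb', hb]
        simp only
        rw [show Finset.Icc 1 N = Finset.Ioc 0 N from Finset.Icc_add_one_left_eq_Ioc 0 N]
        refine le_trans (Finset.sum_le_sum fun n _ => Finset.sum_le_sum_of_subset
          (Finset.Ioc_subset_Ioc (Nat.zero_le k) le_rfl)) ?_
        exact Finset.sum_le_sum_of_subset (Finset.Ioc_subset_Ioc (Nat.zero_le k) le_rfl)
      have hCS2 : a' ^ 2 ≤ μ (V (k + 1)) * b N :=
        hCS.trans (mul_le_mul' (measure_mono hsub) hb'b)
      -- a N ≤ η * a'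
      have haN : a N ≤ η * a' := by
        have h1 : a k ≤ (1 - η⁻¹) * a N := by
          calc a k = (1 - η⁻¹) * ((1 - η⁻¹)⁻¹ * a k) := by
                rw [← mul_assoc, ENNReal.mul_inv_cancel hfac_ne
                  (by exact (tsub_le_self.trans_lt ENNReal.one_lt_top).ne), one_mul]
            _ ≤ (1 - η⁻¹) * a N := by gcongr
        have h2 : a N ≤ (1 - η⁻¹) * a N + a' := by
          calc a N = a k + a' := (hsplit k N hkN).symm
            _ ≤ (1 - η⁻¹) * a N + a' := by gcongr
        have h3 : η⁻¹ * a N ≤ a' := by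
          have hne : (1 - η⁻¹) * a N ≠ ⊤ :=
            ENNReal.mul_ne_top (tsub_le_self.trans_lt ENNReal.one_lt_top).ne (ha_ne_top N)
          have h4 : (1 - η⁻¹) * a N + η⁻¹ * a N = a N := by
            rw [← add_mul, tsub_add_cancel_of_le hinvlt.le, one_mul]
          rw [← ENNReal.add_le_add_iff_left hne, h4]
          exact h2
        calc a N = η * (η⁻¹ * a N) := by
              rw [← mul_assoc, ENNReal.mul_inv_cancel hη0 hηt, one_mul]
          _ ≤ η * a' := by gcongr
      -- conclude
      have hnum : a N ^ 2 ≤ η ^ 2 * a' ^ 2 := by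
        calc a N ^ 2 ≤ (η * a') ^ 2 := by gcongr
          _ = η ^ 2 * a' ^ 2 := mul_pow _ _ _
      calc a N ^ 2 / b N ≤ η ^ 2 * a' ^ 2 / b N := by gcongr
        _ = η ^ 2 * (a' ^ 2 / b N) := by rw [mul_div_assoc]
        _ ≤ η ^ 2 * μ (V (k + 1)) := by
            gcongr
            rw [ENNReal.div_le_iff_le_mul (Or.inr (measure_ne_top μ _))
              (Or.inl (hb_ne_top N))]
            exact hCS2.trans (le_of_eq rfl)
    refine ENNReal.le_of_forall_pos_le_add fun ε hε _ => ?_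
    have hη1 : (1 : ℝ≥0∞) < ((NNReal.sqrt (1 + ε) : ℝ≥0) : ℝ≥0∞) := by
      norm_cast
      calc (1 : ℝ≥0) = NNReal.sqrt 1 := NNReal.sqrt_one.symm
        _ < NNReal.sqrt (1 + ε) := NNReal.sqrt_lt_sqrt.mpr (lt_add_of_pos_right _ hε)
    refine (hkey _ hη1 ENNReal.coe_ne_top).trans ?_
    have hsq : ((NNReal.sqrt (1 + ε) : ℝ≥0) : ℝ≥0∞) ^ 2 = 1 + (ε : ℝ≥0∞) := by
      rw [← ENNReal.coe_pow, NNReal.sq_sqrt]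
      push_cast
      ring
    rw [hsq, add_mul, one_mul]
    gcongr
    calc (ε : ℝ≥0∞) * μ (V (k + 1)) ≤ (ε : ℝ≥0∞) * 1 := by
          gcongr; exact prob_le_one
      _ = ε := mul_one _
  have key1 : Filter.limsup (fun N : ℕ => a N ^ 2 / b N) atTop ≤ μ (Filter.limsup E Filter.atTop) := by
    rw [hmeaslim]
    refine le_iInf fun k => ?_
    exact (bound' k).trans (measure_mono (hVanti (Nat.le_succ k)))
  refine ⟨key1, fun C hC hCbd => ?_⟩
  have hCinv : (C⁻¹ : ℝ≥0∞) ≤ Filter.limsup (fun N : ℕ => a N ^ 2 / b N) atTop := by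
    -- b N ≤ a N + C * a N ^ 2
    have hbbd : ∀ N, b N ≤ a N + C * a N ^ 2 := by
      intro N
      rw [hb, ha]
      simp only
      have hinner : ∀ n ∈ Finset.Icc 1 N,
          ∑ m ∈ Finset.Icc 1 N, μ (E n ∩ E m) ≤
            μ (E n) + C * μ (E n) * ∑ m ∈ Finset.Icc 1 N, μ (E m) := by
        intro n hn
        rw [← Finset.add_sum_erase _ _ hn]
        have h1 : μ (E n ∩ E n) ≤ μ (E n) := measure_mono Set.inter_subset_left
        have h2 : ∑ m ∈ (Finset.Icc 1 N).erase n, μ (E n ∩ E m) ≤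
            C * μ (E n) * ∑ m ∈ Finset.Icc 1 N, μ (E m) := by
          rw [Finset.mul_sum]
          refine le_trans (Finset.sum_le_sum fun m hm => ?_)
            (Finset.sum_le_sum_of_subset (Finset.erase_subset n _))
          have hmIcc := Finset.mem_of_mem_erase hm
          have hne : n ≠ m := fun h => (Finset.ne_of_mem_erase hm) h.symm
          exact hCbd n m (Finset.mem_Icc.mp hn).1 (Finset.mem_Icc.mp hmIcc).1 hne
        exact add_le_add h1 h2
      calc ∑ n ∈ Finset.Icc 1 N, ∑ m ∈ Finset.Icc 1 N, μ (E n ∩ E m)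
          ≤ ∑ n ∈ Finset.Icc 1 N, (μ (E n) + C * μ (E n) * ∑ m ∈ Finset.Icc 1 N, μ (E m)) :=
            Finset.sum_le_sum hinner
        _ = (∑ n ∈ Finset.Icc 1 N, μ (E n)) +
              C * (∑ n ∈ Finset.Icc 1 N, μ (E n)) ^ 2 := by
            rw [Finset.sum_add_distrib]
            congr 1
            rw [← Finset.sum_mul, ← Finset.mul_sum, sq]
            ring
    -- lower bound for the ratio
    have hratio : ∀ᶠ N in atTop, ((a N)⁻¹ + C)⁻¹ ≤ a N ^ 2 / b N := by
      filter_upwards [hev 1 ENNReal.one_ne_top] with N hN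
      have haN0 : a N ≠ 0 := by
        intro h; rw [h] at hN; exact (not_le.mpr zero_lt_one) hN
      have hstep : a N ^ 2 / (a N + C * a N ^ 2) ≤ a N ^ 2 / b N :=
        ENNReal.div_le_div_left (hbbd N) _
      refine le_trans (le_of_eq ?_) hstep
      have hden : a N + C * a N ^ 2 = a N ^ 2 * ((a N)⁻¹ + C) := by
        rw [mul_add, mul_comm C (a N ^ 2)]
        congr 1
        rw [sq, mul_assoc, ENNReal.mul_inv_cancel haN0 (ha_ne_top N), mul_one]
      calc ((a N)⁻¹ + C)⁻¹ = 1 / ((a N)⁻¹ + C) := (one_div _).symm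
        _ = a N ^ 2 * 1 / (a N ^ 2 * ((a N)⁻¹ + C)) :=
            (ENNReal.mul_div_mul_left _ _ (pow_ne_zero 2 haN0)
              (ENNReal.pow_ne_top (ha_ne_top N))).symm
        _ = a N ^ 2 / (a N + C * a N ^ 2) := by rw [mul_one, hden]
    have htd : Tendsto (fun N => ((a N)⁻¹ + C)⁻¹) atTop (𝓝 C⁻¹) := by
      have h1 : Tendsto (fun N => (a N)⁻¹) atTop (𝓝 0) := by
        have := ENNReal.tendsto_inv_iff.mpr hatop
        rwa [ENNReal.inv_top] at this
      have h2 : Tendsto (fun N => (a N)⁻¹ + C) atTop (𝓝 C) := by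
        have := h1.add (tendsto_const_nhds (x := C))
        rwa [zero_add] at this
      exact ENNReal.tendsto_inv_iff.mpr h2
    calc C⁻¹ = Filter.liminf (fun N => ((a N)⁻¹ + C)⁻¹) atTop := htd.liminf_eq.symm
      _ ≤ Filter.liminf (fun N : ℕ => a N ^ 2 / b N) atTop :=
          Filter.liminf_le_liminf hratio
      _ ≤ Filter.limsup (fun N : ℕ => a N ^ 2 / b N) atTop := Filter.liminf_le_limsup
  constructor
  · rw [one_div]
    exact hCinv.trans key1
  · rw [one_div]
    exact ENNReal.inv_pos.mpr hC.ne
end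

section
/- Let $(E_n)_{n\geq 1}$ be events on a probability space such that $\mathbb{P}(E_n)\geq p_\infty > 0$ for all $n$, and such that for all $m<n$, $\mathbb{P}(E_n\cap E_m) = \mathbb{P}(E_m)\mathbb{P}(E_{n-m})$. Then $\mathbb{P}(\limsup_n E_n) > 0$. -/
open MeasureTheory Filter
open scoped ENNReal

theorem stmt5 {Ω : Type*} [MeasurableSpace Ω] (μ : Measure Ω)
    [IsProbabilityMeasure μ]
    (E : ℕ → Set Ω) (hmeas : ∀ n, MeasurableSet (E n))
    (p : ℝ≥0∞) (hp : 0 < p)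
    (hlow : ∀ n : ℕ, 1 ≤ n → p ≤ μ (E n))
    (hprod : ∀ m n : ℕ, 1 ≤ m → m < n →
      μ (E n ∩ E m) = μ (E m) * μ (E (n - m))) :
    0 < μ (Filter.limsup E Filter.atTop) := by
  have key : p ≤ μ (Filter.limsup E Filter.atTop) := by
    rw [limsup_eq_iInf_iSup_of_nat]
    have hd : Directed (· ⊇ ·) fun n => ⋃ i, ⋃ (_ : n ≤ i), E i := by
      intro a b
      exact ⟨max a b, Set.biUnion_subset_biUnion_left fun i hi => le_trans (le_max_left a b) hi,
        Set.biUnion_subset_biUnion_left fun i hi => le_trans (le_max_right a b) hi⟩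
    simp only [Set.iInf_eq_iInter, Set.iSup_eq_iUnion, ge_iff_le]
    rw [Directed.measure_iInter
      (fun n => (MeasurableSet.iUnion fun i => MeasurableSet.iUnion
        fun _ => hmeas i).nullMeasurableSet) hd
      ⟨0, measure_ne_top μ _⟩]
    refine le_iInf fun n => ?_
    calc p ≤ μ (E (max n 1)) := hlow _ (le_max_right n 1)
    _ ≤ _ := measure_mono (Set.subset_biUnion_of_mem (le_max_left n 1))
  exact lt_of_lt_of_le hp key
end

section
/- Let $\zeta:[0,\sigma]\to[0,\infty)$ be continuous with $\zeta(0)=\zeta(\sigma)=0$, let $d_\zeta(s,s')=\zeta(s)+\zeta(s')-2\min_{r\in[s\wedge s',s\vee s']}\zeta(r)$, and let $\mathcal{T}=[0,\sigma]/\{d_\zeta=0\}$ with projection $p:[0,\sigma]\to\mathcal{T}$. Then $(\mathcal{T},d_\zeta)$ is a real tree: it is a geodesic metric space in which any two points are joined by a unique arc. -/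
open Set Topology Filter
set_option linter.unusedSectionVars false

/-- The tree pseudo-distance associated to a lifetime function `ζ`. -/
noncomputable def treeDist (ζ : ℝ → ℝ) (s s' : ℝ) : ℝ :=
  ζ s + ζ s' - 2 * sInf (ζ '' Icc (min s s') (max s s'))

namespace TreeAux

noncomputable def mW (ζ : ℝ → ℝ) (a b : ℝ) : ℝ := sInf (ζ '' Icc (min a b) (max a b))

theorem treeDist_def (ζ : ℝ → ℝ) (a b : ℝ) :
    treeDist ζ a b = ζ a + ζ b - 2 * mW ζ a b := rfl

theorem mW_comm (ζ : ℝ → ℝ) (a b : ℝ) : mW ζ a b = mW ζ b a := by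
  simp [mW, min_comm, max_comm]

theorem treeDist_comm (ζ : ℝ → ℝ) (a b : ℝ) : treeDist ζ a b = treeDist ζ b a := by
  simp only [treeDist_def, mW_comm ζ a b]
  ring

theorem mW_eq (ζ : ℝ → ℝ) {a b : ℝ} (h : a ≤ b) : mW ζ a b = sInf (ζ '' Icc a b) := by
  simp [mW, min_eq_left h, max_eq_right h]

section basic

variable {σ : ℝ} {ζ : ℝ → ℝ} (hcont : ContinuousOn ζ (Icc 0 σ))
  (hnonneg : ∀ s ∈ Icc (0 : ℝ) σ, 0 ≤ ζ s)

include hnonneg in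
theorem bddB {a b : ℝ} (hsub : Icc a b ⊆ Icc 0 σ) : BddBelow (ζ '' Icc a b) := by
  refine ⟨0, ?_⟩
  rintro y ⟨u, hu, rfl⟩
  exact hnonneg u (hsub hu)

include hnonneg in
theorem sInf_le_apply {a b r : ℝ} (hsub : Icc a b ⊆ Icc 0 σ) (hr : r ∈ Icc a b) :
    sInf (ζ '' Icc a b) ≤ ζ r :=
  csInf_le (bddB hnonneg hsub) (mem_image_of_mem ζ hr)

include hnonneg in
theorem sInf_nonneg' {a b : ℝ} (hab : a ≤ b) (hsub : Icc a b ⊆ Icc 0 σ) :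
    0 ≤ sInf (ζ '' Icc a b) := by
  refine le_csInf (by exact (nonempty_Icc.2 hab).image ζ) ?_
  rintro y ⟨u, hu, rfl⟩
  exact hnonneg u (hsub hu)

include hnonneg in
theorem sInf_mono' {a b a' b' : ℝ} (h : a' ≤ b') (hsub : Icc a' b' ⊆ Icc a b)
    (hsub2 : Icc a b ⊆ Icc 0 σ) :
    sInf (ζ '' Icc a b) ≤ sInf (ζ '' Icc a' b') :=
  csInf_le_csInf (bddB hnonneg hsub2) ((nonempty_Icc.2 h).image ζ) (image_mono hsub)

include hcont in
omit hnonneg in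
/-- existence of a minimizer -/
theorem exists_min {a b : ℝ} (hab : a ≤ b) (hsub : Icc a b ⊆ Icc 0 σ) :
    ∃ w ∈ Icc a b, ζ w = sInf (ζ '' Icc a b) := by
  obtain ⟨w, hw, hmin⟩ := isCompact_Icc.exists_isMinOn (nonempty_Icc.2 hab)
    (hcont.mono hsub)
  refine ⟨w, hw, ?_⟩
  symm
  refine IsLeast.csInf_eq ⟨mem_image_of_mem ζ hw, ?_⟩
  rintro y ⟨u, hu, rfl⟩
  exact hmin hu

include hnonneg in
/-- splitting the infimum at an intermediate point -/
theorem sInf_split {a b c : ℝ} (hab : a ≤ b) (hbc : b ≤ c) (hsub : Icc a c ⊆ Icc 0 σ) :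
    sInf (ζ '' Icc a c) = min (sInf (ζ '' Icc a b)) (sInf (ζ '' Icc b c)) := by
  have h1 : Icc a b ⊆ Icc a c := Icc_subset_Icc le_rfl hbc
  have h2 : Icc b c ⊆ Icc a c := Icc_subset_Icc hab le_rfl
  rw [← Icc_union_Icc_eq_Icc hab hbc, image_union]
  exact csInf_union (bddB hnonneg (h1.trans hsub)) ((nonempty_Icc.2 hab).image ζ)
    (bddB hnonneg (h2.trans hsub)) ((nonempty_Icc.2 hbc).image ζ)

/-- pure real covering fact -/
theorem cover_lemma {a b c w : ℝ} (h1 : min a c ≤ w) (h2 : w ≤ max a c) :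
    (min a b ≤ w ∧ w ≤ max a b) ∨ (min b c ≤ w ∧ w ≤ max b c) := by
  rcases le_total a c with h | h <;> rcases le_total w b with hw | hw
  · exact Or.inl ⟨le_trans (min_le_left _ _) (le_trans (by simp [min_eq_left h]) h1),
      le_trans hw (le_max_right _ _)⟩
  · exact Or.inr ⟨le_trans (min_le_left _ _) hw, le_trans h2 (by simp [max_eq_right h])⟩
  · exact Or.inr ⟨le_trans (min_le_right _ _) (le_trans (by simp [min_eq_right h]) h1),
      le_trans hw (le_max_left _ _)⟩
  · exact Or.inl ⟨le_trans (min_le_right _ _) hw, le_trans h2 (by simp [max_eq_left h])⟩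

include hcont hnonneg in
/-- three point inequality -/
theorem three_point {a b c : ℝ} (ha : a ∈ Icc 0 σ) (hb : b ∈ Icc 0 σ) (hc : c ∈ Icc 0 σ) :
    min (mW ζ a b) (mW ζ b c) ≤ mW ζ a c := by
  have hsub : Icc (min a c) (max a c) ⊆ Icc 0 σ := by
    rw [Icc_subset_Icc_iff (min_le_max)]
    exact ⟨le_min ha.1 hc.1, max_le ha.2 hc.2⟩
  obtain ⟨w, hw, hwe⟩ := exists_min hcont (min_le_max) hsub
  have hmac : mW ζ a c = ζ w := by rw [mW]; exact hwe.symm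
  rw [hmac]
  rcases cover_lemma (a := a) (b := b) (c := c) hw.1 hw.2 with h | h
  · refine le_trans (min_le_left _ _) ?_
    refine sInf_le_apply hnonneg ?_ ⟨h.1, h.2⟩
    rw [Icc_subset_Icc_iff (min_le_max)]
    exact ⟨le_min ha.1 hb.1, max_le ha.2 hb.2⟩
  · refine le_trans (min_le_right _ _) ?_
    refine sInf_le_apply hnonneg ?_ ⟨h.1, h.2⟩
    rw [Icc_subset_Icc_iff (min_le_max)]
    exact ⟨le_min hb.1 hc.1, max_le hb.2 hc.2⟩

include hnonneg in
theorem fp_core {a b c e : ℝ} (ha : a ∈ Icc 0 σ) (hb : b ∈ Icc 0 σ) (hc : c ∈ Icc 0 σ)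
    (he : e ∈ Icc 0 σ) (hab : a ≤ b) (hce : c ≤ e) (hac : a ≤ c) :
    min (mW ζ a c + mW ζ b e) (mW ζ a e + mW ζ b c) ≤ mW ζ a b + mW ζ c e := by
  have hIcc : ∀ x y : ℝ, x ∈ Icc (0:ℝ) σ → y ∈ Icc (0:ℝ) σ → Icc x y ⊆ Icc 0 σ := by
    intro x y hx hy
    intro u hu
    exact ⟨le_trans hx.1 hu.1, le_trans hu.2 hy.2⟩
  rcases le_total b c with hbc | hcb
  · -- a ≤ b ≤ c ≤ e
    have h1 : mW ζ a c = min (mW ζ a b) (mW ζ b c) := by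
      rw [mW_eq ζ hac, mW_eq ζ hab, mW_eq ζ hbc]
      exact sInf_split hnonneg hab hbc (hIcc a c ha hc)
    have h2 : mW ζ b e = min (mW ζ b c) (mW ζ c e) := by
      rw [mW_eq ζ (hbc.trans hce), mW_eq ζ hbc, mW_eq ζ hce]
      exact sInf_split hnonneg hbc hce (hIcc b e hb he)
    refine le_trans (min_le_left _ _) ?_
    rw [h1, h2]
    exact add_le_add (min_le_left _ _) (min_le_right _ _)
  · rcases le_total b e with hbe | heb
    · -- a ≤ c ≤ b ≤ e
      have h1 : mW ζ a b = min (mW ζ a c) (mW ζ c b) := by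
        rw [mW_eq ζ hab, mW_eq ζ hac, mW_eq ζ hcb]
        exact sInf_split hnonneg hac hcb (hIcc a b ha hb)
      have h2 : mW ζ c e = min (mW ζ c b) (mW ζ b e) := by
        rw [mW_eq ζ hce, mW_eq ζ hcb, mW_eq ζ hbe]
        exact sInf_split hnonneg hcb hbe (hIcc c e hc he)
      have h3 : mW ζ a e = min (mW ζ a c) (min (mW ζ c b) (mW ζ b e)) := by
        rw [← h2, mW_eq ζ (hac.trans hce), mW_eq ζ hac, mW_eq ζ hce]
        exact sInf_split hnonneg hac hce (hIcc a e ha he)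
      have h4 : mW ζ b c = mW ζ c b := mW_comm ζ b c
      rw [h1, h2, h3, h4]
      rcases le_total (mW ζ a c) (mW ζ c b) with h5 | h5 <;>
        rcases le_total (mW ζ c b) (mW ζ b e) with h6 | h6 <;>
        rcases le_total (mW ζ a c) (mW ζ b e) with h7 | h7 <;>
        simp only [min_def] <;> split_ifs <;> linarith
    · -- a ≤ c ≤ e ≤ b
      have h1 : mW ζ a b = min (mW ζ a c) (min (mW ζ c e) (mW ζ e b)) := by
        have : mW ζ c b = min (mW ζ c e) (mW ζ e b) := by
          rw [mW_eq ζ hcb, mW_eq ζ hce, mW_eq ζ heb]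
          exact sInf_split hnonneg hce heb (hIcc c b hc hb)
        rw [← this, mW_eq ζ hab, mW_eq ζ hac, mW_eq ζ hcb]
        exact sInf_split hnonneg hac hcb (hIcc a b ha hb)
      have h2 : mW ζ a e = min (mW ζ a c) (mW ζ c e) := by
        rw [mW_eq ζ (hac.trans hce), mW_eq ζ hac, mW_eq ζ hce]
        exact sInf_split hnonneg hac hce (hIcc a e ha he)
      have h3 : mW ζ b e = mW ζ e b := mW_comm ζ b e
      have h4 : mW ζ b c = min (mW ζ c e) (mW ζ e b) := by
        rw [mW_comm ζ b c, mW_eq ζ hcb, mW_eq ζ hce, mW_eq ζ heb]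
        exact sInf_split hnonneg hce heb (hIcc c b hc hb)
      rw [h1, h2, h3, h4]
      rcases le_total (mW ζ a c) (mW ζ c e) with h5 | h5 <;>
        rcases le_total (mW ζ c e) (mW ζ e b) with h6 | h6 <;>
        rcases le_total (mW ζ a c) (mW ζ e b) with h7 | h7 <;>
        simp only [min_def] <;> split_ifs <;> linarith

include hnonneg in
/-- four point inequality for mW -/
theorem fp {a b c e : ℝ} (ha : a ∈ Icc 0 σ) (hb : b ∈ Icc 0 σ) (hc : c ∈ Icc 0 σ)
    (he : e ∈ Icc 0 σ) :
    min (mW ζ a c + mW ζ b e) (mW ζ a e + mW ζ b c) ≤ mW ζ a b + mW ζ c e := by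
  have c1 := mW_comm ζ a b
  have c2 := mW_comm ζ c e
  have c3 := mW_comm ζ a c
  have c4 := mW_comm ζ a e
  have c5 := mW_comm ζ b c
  have c6 := mW_comm ζ b e
  have core : ∀ a b c e : ℝ, a ∈ Icc (0:ℝ) σ → b ∈ Icc (0:ℝ) σ → c ∈ Icc (0:ℝ) σ →
      e ∈ Icc (0:ℝ) σ → a ≤ b → c ≤ e →
      min (mW ζ a c + mW ζ b e) (mW ζ a e + mW ζ b c) ≤ mW ζ a b + mW ζ c e := by
    intro a b c e ha hb hc he hab hce
    have d1 := mW_comm ζ a b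
    have d2 := mW_comm ζ c e
    have d3 := mW_comm ζ a c
    have d4 := mW_comm ζ a e
    have d5 := mW_comm ζ b c
    have d6 := mW_comm ζ b e
    rcases le_total a c with hac | hca
    · exact fp_core hnonneg ha hb hc he hab hce hac
    · have := fp_core hnonneg hc he ha hb hce hab hca
      rcases min_le_iff.mp this with h | h <;>
        first
          | exact min_le_iff.mpr (Or.inl (by linarith))
          | exact min_le_iff.mpr (Or.inr (by linarith))
  rcases le_total a b with hab | hba <;> rcases le_total c e with hce | hec
  · exact core a b c e ha hb hc he hab hce
  · have := core a b e c ha hb he hc hab hec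
    rcases min_le_iff.mp this with h | h <;>
      first
        | exact min_le_iff.mpr (Or.inl (by linarith))
        | exact min_le_iff.mpr (Or.inr (by linarith))
  · have := core b a c e hb ha hc he hba hce
    rcases min_le_iff.mp this with h | h <;>
      first
        | exact min_le_iff.mpr (Or.inl (by linarith))
        | exact min_le_iff.mpr (Or.inr (by linarith))
  · have := core b a e c hb ha he hc hba hec
    rcases min_le_iff.mp this with h | h <;>
      first
        | exact min_le_iff.mpr (Or.inl (by linarith))
        | exact min_le_iff.mpr (Or.inr (by linarith))

include hcont hnonneg in
theorem mW_le_apply' {a b r : ℝ} (ha : a ∈ Icc 0 σ) (hb : b ∈ Icc 0 σ)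
    (hr : r ∈ Icc (min a b) (max a b)) : mW ζ a b ≤ ζ r := by
  refine sInf_le_apply hnonneg ?_ hr
  rw [Icc_subset_Icc_iff min_le_max]
  exact ⟨le_min ha.1 hb.1, max_le ha.2 hb.2⟩

theorem mW_self (ζ : ℝ → ℝ) (a : ℝ) : mW ζ a a = ζ a := by
  simp [mW]

include hcont hnonneg in
theorem dist_triangle' {a b c : ℝ} (ha : a ∈ Icc 0 σ) (hb : b ∈ Icc 0 σ) (hc : c ∈ Icc 0 σ) :
    treeDist ζ a c ≤ treeDist ζ a b + treeDist ζ b c := by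
  simp only [treeDist_def]
  have h1 : min (mW ζ a b) (mW ζ b c) ≤ mW ζ a c := three_point hcont hnonneg ha hb hc
  have h2 : mW ζ a b ≤ ζ b :=
    mW_le_apply' hcont hnonneg ha hb ⟨min_le_right a b, le_max_right a b⟩
  have h3 : mW ζ b c ≤ ζ b :=
    mW_le_apply' hcont hnonneg hb hc ⟨min_le_left b c, le_max_left b c⟩
  rcases le_total (mW ζ a b) (mW ζ b c) with h | h
  · have := min_eq_left h ▸ h1
    linarith
  · have := min_eq_right h ▸ h1
    linarith

end basic


/-- A copy of the interval `Icc 0 σ`, free of instances. -/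
structure W (σ : ℝ) : Type where
  val : ℝ
  mem : val ∈ Icc (0:ℝ) σ

/-- The pseudometric space on `W σ` induced by `treeDist`. -/
noncomputable def treePseudo (σ : ℝ) (ζ : ℝ → ℝ) (hcont : ContinuousOn ζ (Icc 0 σ))
    (hnonneg : ∀ s ∈ Icc (0 : ℝ) σ, 0 ≤ ζ s) : PseudoMetricSpace (W σ) where
  dist a b := treeDist ζ a.val b.val
  dist_self a := by simp [treeDist_def, mW_self]; ring
  dist_comm a b := by simp only [treeDist_def, mW_comm ζ a.val b.val]; ring
  dist_triangle a b c := dist_triangle' hcont hnonneg a.mem b.mem c.mem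

noncomputable def AF (ζ : ℝ → ℝ) (s t h : ℝ) : ℝ :=
  sSup {u | u ∈ Icc s t ∧ h ≤ sInf (ζ '' Icc s u)}

noncomputable def BF (ζ : ℝ → ℝ) (s t k : ℝ) : ℝ :=
  sInf {u | u ∈ Icc s t ∧ k ≤ sInf (ζ '' Icc u t)}

section geod

variable {σ : ℝ} {ζ : ℝ → ℝ} (hcont : ContinuousOn ζ (Icc 0 σ))
  (hnonneg : ∀ s ∈ Icc (0 : ℝ) σ, 0 ≤ ζ s)
  {s t : ℝ} (hs : s ∈ Icc (0:ℝ) σ) (ht : t ∈ Icc (0:ℝ) σ) (hst : s ≤ t)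

include hcont hnonneg hs ht hst

theorem key_A {w : ℝ} (hw : w ∈ Icc s t) (hwe : ζ w = sInf (ζ '' Icc s t))
    {h : ℝ} (hmb : sInf (ζ '' Icc s t) < h) (hhs : h ≤ ζ s) :
    AF ζ s t h ∈ Icc s t ∧ ζ (AF ζ s t h) = h ∧
      sInf (ζ '' Icc s (AF ζ s t h)) = h ∧ AF ζ s t h ≤ w := by
  have hsubI : Icc s t ⊆ Icc 0 σ := fun u hu => ⟨hs.1.trans hu.1, hu.2.trans ht.2⟩
  have hsub2 : ∀ {u v : ℝ}, u ∈ Icc s t → v ∈ Icc s t → Icc u v ⊆ Icc 0 σ := by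
    intro u v hu hv
    exact (Icc_subset_Icc hu.1 hv.2).trans hsubI
  set S : Set ℝ := {u | u ∈ Icc s t ∧ h ≤ sInf (ζ '' Icc s u)} with hS
  have hsS : s ∈ S := by
    constructor
    · exact ⟨le_rfl, hst⟩
    · simp only [Icc_self, image_singleton, csInf_singleton]
      exact hhs
  have hSbdd : BddAbove S := ⟨t, fun u hu => hu.1.2⟩
  have hAle : AF ζ s t h ≤ t := csSup_le ⟨s, hsS⟩ (fun u hu => hu.1.2)
  have hsA : s ≤ AF ζ s t h := le_csSup hSbdd hsS
  have hAmem : AF ζ s t h ∈ Icc s t := ⟨hsA, hAle⟩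
  have pointwise : ∀ v ∈ Ico s (AF ζ s t h), h ≤ ζ v := by
    rintro v ⟨hv1, hv2⟩
    obtain ⟨u, huS, hvu⟩ := exists_lt_of_lt_csSup ⟨s, hsS⟩ hv2
    refine le_trans huS.2 (sInf_le_apply hnonneg (hsub2 ⟨le_rfl, hst⟩ huS.1) ⟨hv1, hvu.le⟩)
  have hζA : h ≤ ζ (AF ζ s t h) := by
    rcases eq_or_lt_of_le hsA with heq | hlt
    · rw [← heq]; exact hhs
    · have hne : (𝓝[Ico s (AF ζ s t h)] (AF ζ s t h)).NeBot := by
        refine mem_closure_iff_nhdsWithin_neBot.mp ?_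
        rw [closure_Ico (ne_of_lt hlt)]
        exact ⟨hsA, le_rfl⟩
      have htend : Filter.Tendsto ζ (𝓝[Ico s (AF ζ s t h)] (AF ζ s t h)) (𝓝 (ζ (AF ζ s t h))) := by
        refine (hcont _ (hsubI hAmem)).mono_left (nhdsWithin_mono _ ?_)
        exact (Ico_subset_Icc_self).trans ((Icc_subset_Icc le_rfl hAle).trans hsubI)
      exact ge_of_tendsto htend (eventually_mem_nhdsWithin.mono pointwise)
  have hMA : h ≤ sInf (ζ '' Icc s (AF ζ s t h)) := by
    refine le_csInf ((nonempty_Icc.2 hsA).image ζ) ?_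
    rintro y ⟨v, hv, rfl⟩
    rcases eq_or_lt_of_le hv.2 with heq | hlt
    · rw [heq]; exact hζA
    · exact pointwise v ⟨hv.1, hlt⟩
  have hAw : AF ζ s t h ≤ w := by
    by_contra hcon
    push_neg at hcon
    have h1 : h ≤ sInf (ζ '' Icc s w) := by
      refine le_trans hMA (sInf_mono' hnonneg hw.1 (Icc_subset_Icc le_rfl hcon.le) ?_)
      exact hsub2 ⟨le_rfl, hst⟩ hAmem
    have h2 : sInf (ζ '' Icc s w) ≤ ζ w :=
      sInf_le_apply hnonneg (hsub2 ⟨le_rfl, hst⟩ hw) ⟨hw.1, le_rfl⟩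
    rw [hwe] at h2
    linarith
  have hAlt : AF ζ s t h < t := by
    rcases eq_or_lt_of_le hAle with heq | hlt
    · exfalso
      have := hMA
      rw [heq] at this
      linarith
    · exact hlt
  have hζAle : ζ (AF ζ s t h) ≤ h := by
    by_contra hgt
    push_neg at hgt
    have hc : ContinuousWithinAt ζ (Icc 0 σ) (AF ζ s t h) := hcont _ (hsubI hAmem)
    rw [Metric.continuousWithinAt_iff] at hc
    obtain ⟨δ, hδ, hball⟩ := hc (ζ (AF ζ s t h) - h) (by linarith)
    set u := min t (AF ζ s t h + δ/2) with hu
    have hAu : AF ζ s t h < u := lt_min hAlt (by linarith)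
    have humem : u ∈ Icc s t := ⟨hsA.trans hAu.le, min_le_left _ _⟩
    have hpt2 : ∀ v ∈ Icc (AF ζ s t h) u, h ≤ ζ v := by
      intro v hv
      have hvmem : v ∈ Icc (0:ℝ) σ := hsub2 hAmem humem hv
      have hd : dist v (AF ζ s t h) < δ := by
        rw [Real.dist_eq, abs_of_nonneg (by linarith [hv.1])]
        have : v ≤ AF ζ s t h + δ/2 := hv.2.trans (min_le_right _ _)
        linarith
      have := hball hvmem hd
      rw [Real.dist_eq] at this
      have := abs_lt.mp this
      linarith [this.1]
    have huS : u ∈ S := by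
      refine ⟨humem, ?_⟩
      rw [sInf_split hnonneg hsA hAu.le (hsub2 ⟨le_rfl, hst⟩ humem)]
      refine le_min hMA (le_csInf ((nonempty_Icc.2 hAu.le).image ζ) ?_)
      rintro y ⟨v, hv, rfl⟩
      exact hpt2 v hv
    have : u ≤ AF ζ s t h := le_csSup hSbdd huS
    linarith
  have hζeq : ζ (AF ζ s t h) = h := le_antisymm hζAle hζA
  refine ⟨hAmem, hζeq, le_antisymm ?_ hMA, hAw⟩
  · refine le_trans (sInf_le_apply hnonneg (hsub2 ⟨le_rfl, hst⟩ hAmem) ⟨hsA, le_rfl⟩) ?_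
    exact le_of_eq hζeq

theorem AF_mono {h h' : ℝ} (hmb : sInf (ζ '' Icc s t) < h) (hhh : h ≤ h') (hh's : h' ≤ ζ s) :
    AF ζ s t h' ≤ AF ζ s t h := by
  have hsS : s ∈ {u | u ∈ Icc s t ∧ h' ≤ sInf (ζ '' Icc s u)} := by
    constructor
    · exact ⟨le_rfl, hst⟩
    · simp only [Icc_self, image_singleton, csInf_singleton]
      exact hh's
  refine csSup_le_csSup ⟨t, fun u hu => hu.1.2⟩ ⟨s, hsS⟩ ?_
  rintro u ⟨hu1, hu2⟩
  exact ⟨hu1, hhh.trans hu2⟩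

theorem key_B {w : ℝ} (hw : w ∈ Icc s t) (hwe : ζ w = sInf (ζ '' Icc s t))
    {k : ℝ} (hmb : sInf (ζ '' Icc s t) < k) (hkt : k ≤ ζ t) :
    BF ζ s t k ∈ Icc s t ∧ ζ (BF ζ s t k) = k ∧
      sInf (ζ '' Icc (BF ζ s t k) t) = k ∧ w ≤ BF ζ s t k := by
  have hsubI : Icc s t ⊆ Icc 0 σ := fun u hu => ⟨hs.1.trans hu.1, hu.2.trans ht.2⟩
  have hsub2 : ∀ {u v : ℝ}, u ∈ Icc s t → v ∈ Icc s t → Icc u v ⊆ Icc 0 σ := by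
    intro u v hu hv
    exact (Icc_subset_Icc hu.1 hv.2).trans hsubI
  set S : Set ℝ := {u | u ∈ Icc s t ∧ k ≤ sInf (ζ '' Icc u t)} with hS
  have htS : t ∈ S := by
    constructor
    · exact ⟨hst, le_rfl⟩
    · simp only [Icc_self, image_singleton, csInf_singleton]
      exact hkt
  have hSbdd : BddBelow S := ⟨s, fun u hu => hu.1.1⟩
  have hsB : s ≤ BF ζ s t k := le_csInf ⟨t, htS⟩ (fun u hu => hu.1.1)
  have hBt : BF ζ s t k ≤ t := csInf_le hSbdd htS
  have hBmem : BF ζ s t k ∈ Icc s t := ⟨hsB, hBt⟩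
  have pointwise : ∀ v ∈ Ioc (BF ζ s t k) t, k ≤ ζ v := by
    rintro v ⟨hv1, hv2⟩
    obtain ⟨u, huS, hvu⟩ := exists_lt_of_csInf_lt ⟨t, htS⟩ hv1
    exact le_trans huS.2 (sInf_le_apply hnonneg (hsub2 huS.1 ⟨hst, le_rfl⟩) ⟨hvu.le, hv2⟩)
  have hζB : k ≤ ζ (BF ζ s t k) := by
    rcases eq_or_lt_of_le hBt with heq | hlt
    · rw [heq]; exact hkt
    · have hne : (𝓝[Ioc (BF ζ s t k) t] (BF ζ s t k)).NeBot := by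
        refine mem_closure_iff_nhdsWithin_neBot.mp ?_
        rw [closure_Ioc (ne_of_lt hlt)]
        exact ⟨le_rfl, hBt⟩
      have htend : Filter.Tendsto ζ (𝓝[Ioc (BF ζ s t k) t] (BF ζ s t k))
          (𝓝 (ζ (BF ζ s t k))) := by
        refine (hcont _ (hsubI hBmem)).mono_left (nhdsWithin_mono _ ?_)
        exact (Ioc_subset_Icc_self).trans ((Icc_subset_Icc hsB le_rfl).trans hsubI)
      exact ge_of_tendsto htend (eventually_mem_nhdsWithin.mono pointwise)
  have hNB : k ≤ sInf (ζ '' Icc (BF ζ s t k) t) := by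
    refine le_csInf ((nonempty_Icc.2 hBt).image ζ) ?_
    rintro y ⟨v, hv, rfl⟩
    rcases eq_or_lt_of_le hv.1 with heq | hlt
    · rw [← heq]; exact hζB
    · exact pointwise v ⟨hlt, hv.2⟩
  have hwB : w ≤ BF ζ s t k := by
    by_contra hcon
    push_neg at hcon
    have h1 : k ≤ sInf (ζ '' Icc w t) := by
      refine le_trans hNB (sInf_mono' hnonneg hw.2 (Icc_subset_Icc hcon.le le_rfl) ?_)
      exact hsub2 hBmem ⟨hst, le_rfl⟩
    have h2 : sInf (ζ '' Icc w t) ≤ ζ w :=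
      sInf_le_apply hnonneg (hsub2 hw ⟨hst, le_rfl⟩) ⟨le_rfl, hw.2⟩
    rw [hwe] at h2
    linarith
  have hBgt : s < BF ζ s t k := by
    rcases eq_or_lt_of_le hsB with heq | hlt
    · exfalso
      have := hNB
      rw [← heq] at this
      linarith
    · exact hlt
  have hζBle : ζ (BF ζ s t k) ≤ k := by
    by_contra hgt
    push_neg at hgt
    have hc : ContinuousWithinAt ζ (Icc 0 σ) (BF ζ s t k) := hcont _ (hsubI hBmem)
    rw [Metric.continuousWithinAt_iff] at hc
    obtain ⟨δ, hδ, hball⟩ := hc (ζ (BF ζ s t k) - k) (by linarith)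
    set u := max s (BF ζ s t k - δ/2) with hu
    have hBu : u < BF ζ s t k := max_lt hBgt (by linarith)
    have humem : u ∈ Icc s t := ⟨le_max_left _ _, hBu.le.trans hBt⟩
    have hpt2 : ∀ v ∈ Icc u (BF ζ s t k), k ≤ ζ v := by
      intro v hv
      have hvmem : v ∈ Icc (0:ℝ) σ := hsub2 humem hBmem hv
      have hd : dist v (BF ζ s t k) < δ := by
        rw [Real.dist_eq, abs_of_nonpos (by linarith [hv.2])]
        have : BF ζ s t k - δ/2 ≤ v := (le_max_right _ _).trans hv.1
        linarith
      have := hball hvmem hd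
      rw [Real.dist_eq] at this
      have := abs_lt.mp this
      linarith [this.1]
    have huS : u ∈ S := by
      refine ⟨humem, ?_⟩
      rw [sInf_split hnonneg hBu.le hBt (hsub2 humem ⟨hst, le_rfl⟩)]
      refine le_min (le_csInf ((nonempty_Icc.2 hBu.le).image ζ) ?_) hNB
      rintro y ⟨v, hv, rfl⟩
      exact hpt2 v hv
    have : BF ζ s t k ≤ u := csInf_le hSbdd huS
    linarith
  have hζeq : ζ (BF ζ s t k) = k := le_antisymm hζBle hζB
  refine ⟨hBmem, hζeq, le_antisymm ?_ hNB, hwB⟩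
  · refine le_trans (sInf_le_apply hnonneg (hsub2 hBmem ⟨hst, le_rfl⟩) ⟨le_rfl, hBt⟩) ?_
    exact le_of_eq hζeq

theorem BF_mono {k k' : ℝ} (hmb : sInf (ζ '' Icc s t) < k) (hkk : k ≤ k') (hk't : k' ≤ ζ t) :
    BF ζ s t k ≤ BF ζ s t k' := by
  have htS : t ∈ {u | u ∈ Icc s t ∧ k' ≤ sInf (ζ '' Icc u t)} := by
    constructor
    · exact ⟨hst, le_rfl⟩
    · simp only [Icc_self, image_singleton, csInf_singleton]
      exact hk't
  refine csInf_le_csInf ⟨s, fun u hu => hu.1.1⟩ ⟨t, htS⟩ ?_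
  rintro u ⟨hu1, hu2⟩
  exact ⟨hu1, hkk.trans hu2⟩

theorem geo : ∃ P : ℝ → ℝ, (∀ r, P r ∈ Icc 0 σ) ∧ treeDist ζ s (P 0) = 0 ∧
    treeDist ζ t (P (treeDist ζ s t)) = 0 ∧
    ∀ r ∈ Icc 0 (treeDist ζ s t), ∀ r' ∈ Icc 0 (treeDist ζ s t), r ≤ r' →
      treeDist ζ (P r) (P r') = r' - r := by
  classical
  have hsubI : Icc s t ⊆ Icc 0 σ := fun u hu => ⟨hs.1.trans hu.1, hu.2.trans ht.2⟩
  have hsub2 : ∀ {u v : ℝ}, u ∈ Icc s t → v ∈ Icc s t → Icc u v ⊆ Icc 0 σ := by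
    intro u v hu hv
    exact (Icc_subset_Icc hu.1 hv.2).trans hsubI
  obtain ⟨w, hw, hwe⟩ := exists_min hcont hst hsubI
  set mb := sInf (ζ '' Icc s t) with hmbdef
  have hmbs : mb ≤ ζ s := sInf_le_apply hnonneg hsubI ⟨le_rfl, hst⟩
  have hmbt : mb ≤ ζ t := sInf_le_apply hnonneg hsubI ⟨hst, le_rfl⟩
  have hd0 : treeDist ζ s t = ζ s + ζ t - 2 * mb := by
    rw [treeDist_def, mW_eq ζ hst]
  set d0 : ℝ := ζ s + ζ t - 2 * mb with hd0def
  set c0 : ℝ := ζ s - mb with hc0def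
  have hc0nn : 0 ≤ c0 := by simp [hc0def]; linarith
  have hd0nn : 0 ≤ d0 := by simp [hd0def]; linarith
  have hc0d0 : c0 ≤ d0 := by simp [hc0def, hd0def]; linarith
  set p0 : ℝ → ℝ := fun r =>
    if mb < ζ s - r then AF ζ s t (ζ s - r)
    else if c0 < r then BF ζ s t (r - ζ s + 2 * mb) else w with hp0def
  set P : ℝ → ℝ := fun r => if 0 ≤ r ∧ r ≤ d0 then p0 r else s with hPdef
  -- key bundles
  have KA : ∀ r : ℝ, 0 ≤ r → mb < ζ s - r →
      AF ζ s t (ζ s - r) ∈ Icc s t ∧ ζ (AF ζ s t (ζ s - r)) = ζ s - r ∧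
        sInf (ζ '' Icc s (AF ζ s t (ζ s - r))) = ζ s - r ∧ AF ζ s t (ζ s - r) ≤ w :=
    fun r hr h1 => key_A hcont hnonneg hs ht hst hw hwe h1 (by linarith)
  have KB : ∀ r : ℝ, c0 < r → r ≤ d0 →
      BF ζ s t (r - ζ s + 2 * mb) ∈ Icc s t ∧
        ζ (BF ζ s t (r - ζ s + 2 * mb)) = r - ζ s + 2 * mb ∧
        sInf (ζ '' Icc (BF ζ s t (r - ζ s + 2 * mb)) t) = r - ζ s + 2 * mb ∧
        w ≤ BF ζ s t (r - ζ s + 2 * mb) := by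
    intro r h1 h2
    refine key_B hcont hnonneg hs ht hst hw hwe ?_ ?_
    · rw [← hmbdef]; simp only [hc0def] at h1; linarith
    · simp only [hd0def] at h2; linarith
  have hlow : ∀ u v : ℝ, u ∈ Icc s t → v ∈ Icc s t → u ≤ v →
      mb ≤ sInf (ζ '' Icc u v) := by
    intro u v hu hv huv
    exact sInf_mono' hnonneg huv (Icc_subset_Icc hu.1 hv.2) hsubI
  have hupp : ∀ u v r0 : ℝ, u ∈ Icc s t → v ∈ Icc s t → r0 ∈ Icc u v →
      sInf (ζ '' Icc u v) ≤ ζ r0 := by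
    intro u v r0 hu hv hr0
    exact sInf_le_apply hnonneg (hsub2 hu hv) hr0
  -- branch values of p0
  have hbA : ∀ r : ℝ, mb < ζ s - r → p0 r = AF ζ s t (ζ s - r) := by
    intro r h1
    simp only [hp0def]
    rw [if_pos h1]
  have hbB : ∀ r : ℝ, ¬ mb < ζ s - r → c0 < r → p0 r = BF ζ s t (r - ζ s + 2 * mb) := by
    intro r h1 h2
    simp only [hp0def]
    rw [if_neg h1, if_pos h2]
  have hbW : ∀ r : ℝ, ¬ mb < ζ s - r → ¬ c0 < r → p0 r = w := by
    intro r h1 h2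
    simp only [hp0def]
    rw [if_neg h1, if_neg h2]
  -- membership of the path
  have hmem0 : ∀ r : ℝ, 0 ≤ r → r ≤ d0 → p0 r ∈ Icc s t := by
    intro r h1 h2
    by_cases hA : mb < ζ s - r
    · rw [hbA r hA]; exact (KA r h1 hA).1
    · by_cases hB : c0 < r
      · rw [hbB r hA hB]; exact (KB r hB h2).1
      · rw [hbW r hA hB]; exact hw
  -- the master pairwise distance computation
  have hpair : ∀ r r' : ℝ, 0 ≤ r → r ≤ d0 → 0 ≤ r' → r' ≤ d0 → r ≤ r' →
      treeDist ζ (p0 r) (p0 r') = r' - r := by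
    intro r r' hr0 hrd hr'0 hr'd hrr
    by_cases h1 : mb < ζ s - r
    · obtain ⟨huI, hζu, hMu, huw⟩ := KA r hr0 h1
      rw [hbA r h1]
      by_cases h2 : mb < ζ s - r'
      · -- A-A
        obtain ⟨hvI, hζv, hMv, hvw⟩ := KA r' hr'0 h2
        rw [hbA r' h2]
        have huv : AF ζ s t (ζ s - r) ≤ AF ζ s t (ζ s - r') :=
          AF_mono hcont hnonneg hs ht hst h2 (by linarith) (by linarith)
        have hval : sInf (ζ '' Icc (AF ζ s t (ζ s - r)) (AF ζ s t (ζ s - r'))) = ζ s - r' := by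
          refine le_antisymm ?_ ?_
          · refine le_trans (hupp _ _ _ huI hvI ⟨huv, le_rfl⟩) (le_of_eq hζv)
          · refine le_trans (le_of_eq hMv.symm) ?_
            exact sInf_mono' hnonneg huv (Icc_subset_Icc huI.1 le_rfl) (hsub2 ⟨le_rfl, hst⟩ hvI)
        rw [treeDist_def, mW_eq ζ huv, hval, hζu, hζv]
        ring
      · by_cases h2' : c0 < r'
        · -- A-B
          obtain ⟨hvI, hζv, hMv, hwv⟩ := KB r' h2' hr'd
          rw [hbB r' h2 h2']
          have huv : AF ζ s t (ζ s - r) ≤ BF ζ s t (r' - ζ s + 2 * mb) := huw.trans hwv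
          have hval : sInf (ζ '' Icc (AF ζ s t (ζ s - r)) (BF ζ s t (r' - ζ s + 2 * mb))) = mb := by
            refine le_antisymm ?_ (hlow _ _ huI hvI huv)
            exact le_trans (hupp _ _ _ huI hvI ⟨huw, hwv⟩) (le_of_eq hwe)
          rw [treeDist_def, mW_eq ζ huv, hval, hζu, hζv]
          ring
        · -- A-w  (here r' = c0)
          have hr'c : r' = c0 := by
            push_neg at h2 h2'
            simp only [hc0def] at h2' ⊢
            linarith
          rw [hbW r' h2 h2']
          have hval : sInf (ζ '' Icc (AF ζ s t (ζ s - r)) w) = mb := by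
            refine le_antisymm ?_ (hlow _ _ huI hw huw)
            exact le_trans (hupp _ _ _ huI hw ⟨huw, le_rfl⟩) (le_of_eq hwe)
          rw [treeDist_def, mW_eq ζ huw, hval, hζu, hwe]
          rw [hr'c]
          simp only [hc0def]
          ring
    · by_cases h1' : c0 < r
      · -- B-B
        obtain ⟨huI, hζu, hMu, hwu⟩ := KB r h1' hrd
        have h2 : ¬ mb < ζ s - r' := by
          push_neg at h1 ⊢
          linarith
        have h2' : c0 < r' := lt_of_lt_of_le h1' hrr
        obtain ⟨hvI, hζv, hMv, hwv⟩ := KB r' h2' hr'd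
        rw [hbB r h1 h1', hbB r' h2 h2']
        have huv : BF ζ s t (r - ζ s + 2 * mb) ≤ BF ζ s t (r' - ζ s + 2 * mb) := by
          refine BF_mono hcont hnonneg hs ht hst ?_ (by linarith) ?_
          · rw [← hmbdef]; simp only [hc0def] at h1'; linarith
          · simp only [hd0def] at hr'd; linarith
        have hval : sInf (ζ '' Icc (BF ζ s t (r - ζ s + 2 * mb))
            (BF ζ s t (r' - ζ s + 2 * mb))) = r - ζ s + 2 * mb := by
          refine le_antisymm ?_ ?_
          · exact le_trans (hupp _ _ _ huI hvI ⟨le_rfl, huv⟩) (le_of_eq hζu)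
          · refine le_trans (le_of_eq hMu.symm) ?_
            exact sInf_mono' hnonneg huv (Icc_subset_Icc le_rfl hvI.2) (hsub2 huI ⟨hst, le_rfl⟩)
        rw [treeDist_def, mW_eq ζ huv, hval, hζu, hζv]
        ring
      · -- w-? (here r = c0)
        have hrc : r = c0 := by
          push_neg at h1 h1'
          simp only [hc0def] at h1' ⊢
          linarith
        rw [hbW r h1 h1']
        by_cases h2 : mb < ζ s - r'
        · exfalso
          push_neg at h1
          linarith
        · by_cases h2' : c0 < r'
          · -- w-B
            obtain ⟨hvI, hζv, hMv, hwv⟩ := KB r' h2' hr'd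
            rw [hbB r' h2 h2']
            have hval : sInf (ζ '' Icc w (BF ζ s t (r' - ζ s + 2 * mb))) = mb := by
              refine le_antisymm ?_ (hlow _ _ hw hvI hwv)
              exact le_trans (hupp _ _ _ hw hvI ⟨le_rfl, hwv⟩) (le_of_eq hwe)
            rw [treeDist_def, mW_eq ζ hwv, hval, hζv, hwe, hrc]
            simp only [hc0def]
            ring
          · -- w-w
            have hr'c : r' = c0 := by
              push_neg at h2 h2'
              simp only [hc0def] at h2' ⊢
              linarith
            rw [hbW r' h2 h2', treeDist_def, mW_self, hrc, hr'c]
            ring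
  refine ⟨P, ?_, ?_, ?_, ?_⟩
  · -- membership
    intro r
    simp only [hPdef]
    split_ifs with h
    · exact hsubI (hmem0 r h.1 h.2)
    · exact hs
  · -- start point
    have hP0 : P 0 = p0 0 := by
      simp only [hPdef]
      rw [if_pos ⟨le_rfl, hd0nn⟩]
    rw [hP0]
    by_cases h1 : mb < ζ s - 0
    · obtain ⟨huI, hζu, hMu, huw⟩ := KA 0 le_rfl h1
      rw [hbA 0 h1, treeDist_def, mW_eq ζ huI.1, hMu, hζu]
      ring
    · have hζs : ζ s = mb := by push_neg at h1; linarith [hmbs]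
      have h1' : ¬ c0 < (0:ℝ) := by simp only [hc0def]; push_neg; linarith
      rw [hbW 0 h1 h1']
      have hval : sInf (ζ '' Icc s w) = mb := by
        refine le_antisymm ?_ (hlow _ _ ⟨le_rfl, hst⟩ hw hw.1)
        refine le_trans (hupp _ _ _ ⟨le_rfl, hst⟩ hw ⟨le_rfl, hw.1⟩) (le_of_eq hζs)
      rw [treeDist_def, mW_eq ζ hw.1, hval, hζs, hwe]
      ring
  · -- end point
    rw [hd0]
    have hPd : P d0 = p0 d0 := by
      simp only [hPdef]
      rw [if_pos ⟨hd0nn, le_rfl⟩]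
    rw [hPd]
    by_cases h2' : c0 < d0
    · have h2 : ¬ mb < ζ s - d0 := by
        simp only [hd0def, hc0def] at h2' ⊢
        push_neg
        linarith
      obtain ⟨hvI, hζv, hMv, hwv⟩ := KB d0 h2' le_rfl
      rw [hbB d0 h2 h2']
      have hvt : ζ (BF ζ s t (d0 - ζ s + 2 * mb)) = ζ t := by
        rw [hζv]; simp only [hd0def]; ring
      have hMvt : sInf (ζ '' Icc (BF ζ s t (d0 - ζ s + 2 * mb)) t) = ζ t := by
        rw [hMv]; simp only [hd0def]; ring
      rw [treeDist_def, mW_comm, mW_eq ζ hvI.2, hMvt, hvt]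
      ring
    · have hζt : ζ t = mb := by
        simp only [hc0def, hd0def] at h2'
        push_neg at h2'
        linarith
      have h2 : ¬ mb < ζ s - d0 := by
        simp only [hd0def]
        push_neg
        linarith
      rw [hbW d0 h2 h2']
      have hval : sInf (ζ '' Icc w t) = mb := by
        refine le_antisymm ?_ (hlow _ _ hw ⟨hst, le_rfl⟩ hw.2)
        exact le_trans (hupp _ _ _ hw ⟨hst, le_rfl⟩ ⟨le_rfl, hw.2⟩) (le_of_eq hwe)
      rw [treeDist_def, mW_comm, mW_eq ζ hw.2, hval, hζt, hwe]
      ring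
  · -- isometric parametrization
    rw [hd0]
    rintro r ⟨hr0, hrd⟩ r' ⟨hr'0, hr'd⟩ hrr
    have h1 : P r = p0 r := by
      simp only [hPdef]; rw [if_pos ⟨hr0, hrd⟩]
    have h2 : P r' = p0 r' := by
      simp only [hPdef]; rw [if_pos ⟨hr'0, hr'd⟩]
    rw [h1, h2]
    exact hpair r r' hr0 hrd hr'0 hr'd hrr

end geod

section arcs

variable {T : Type} [MetricSpace T]

/-- Four-point (0-hyperbolicity) condition. -/
def FourPt (T : Type) [MetricSpace T] : Prop :=
  ∀ z a b c : T, min (dist z a + dist z c - dist a c) (dist z c + dist z b - dist c b) ≤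
    dist z a + dist z b - dist a b

/-- In a 0-hyperbolic space, any point between the endpoints of a continuous injective
path lies on the path. -/
theorem seg_sub (hfp : FourPt T) (f : ℝ → T) {u v : ℝ} (huv : u ≤ v)
    (hf : ContinuousOn f (Icc u v)) (z : T)
    (hz : dist (f u) z + dist z (f v) = dist (f u) (f v)) : z ∈ f '' Icc u v := by
  by_contra hzK
  have hzu : z ≠ f u := by
    rintro rfl
    exact hzK ⟨u, ⟨le_rfl, huv⟩, rfl⟩
  have hzv : z ≠ f v := by
    rintro rfl
    exact hzK ⟨v, ⟨huv, le_rfl⟩, rfl⟩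
  set F : T → ℝ := fun q => dist z q + dist z (f u) - dist (f u) q with hF
  have hFcont : Continuous F := by
    fun_prop
  have hFnonneg : ∀ q, 0 ≤ F q := by
    intro q
    have h1 := dist_triangle (f u) z q
    have h2 : dist (f u) z = dist z (f u) := dist_comm _ _
    simp only [hF]
    linarith
  set U : Set T := {q | 0 < F q} with hU
  set V : Set T := {q | F q = 0 ∧ q ≠ z} with hV
  have hUopen : IsOpen U := isOpen_lt continuous_const hFcont
  have hVopen : IsOpen V := by
    rw [Metric.isOpen_iff]
    rintro q ⟨hq0, hqz⟩
    refine ⟨dist z q, dist_pos.2 (fun e => hqz e.symm), ?_⟩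
    rintro q' hq'
    rw [Metric.mem_ball] at hq'
    have hq'z : q' ≠ z := by
      rintro rfl
      rw [dist_comm] at hq'
      exact lt_irrefl _ hq'
    have h2 : 0 < dist z q' + dist z q - dist q' q := by
      have t1 := dist_triangle z q' q
      have t2 : dist q' q = dist q q' := dist_comm _ _
      linarith
    have hkey := hfp z (f u) q q'
    have hFq' : F q' ≤ 0 := by
      simp only [hF] at hq0 ⊢
      rcases min_le_iff.mp hkey with h | h
      · linarith
      · linarith
    exact ⟨le_antisymm hFq' (hFnonneg q'), hq'z⟩
  have hKpc : IsPreconnected (f '' Icc u v) := (isPreconnected_Icc).image f hf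
  have hcover : f '' Icc u v ⊆ U ∪ V := by
    rintro q ⟨r, hr, rfl⟩
    rcases lt_or_eq_of_le (hFnonneg (f r)) with h | h
    · exact Or.inl h
    · refine Or.inr ⟨h.symm, ?_⟩
      rintro rfl
      exact hzK ⟨r, hr, rfl⟩
  have hfuU : f u ∈ f '' Icc u v ∩ U := by
    refine ⟨⟨u, ⟨le_rfl, huv⟩, rfl⟩, ?_⟩
    simp only [hU, hF, mem_setOf_eq, dist_self]
    have hpos : (0:ℝ) < dist z (f u) := dist_pos.2 hzu
    linarith
  have hfvV : f v ∈ f '' Icc u v ∩ V := by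
    refine ⟨⟨v, ⟨huv, le_rfl⟩, rfl⟩, ?_, Ne.symm hzv⟩
    simp only [hF]
    have h2 : dist (f u) z = dist z (f u) := dist_comm _ _
    linarith
  obtain ⟨q, _, hqU, hqV⟩ := hKpc U V hUopen hVopen hcover ⟨f u, hfuU⟩ ⟨f v, hfvV⟩
  rw [hU, mem_setOf_eq] at hqU
  rw [hV, mem_setOf_eq] at hqV
  linarith [hqV.1, hqU]

/-- every arc between two points has the geodesic segment as image -/
theorem arc_eq_seg (hfp : FourPt T) {x y : T} (hxy : x ≠ y) (γ : ℝ → T)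
    (hγ0 : γ 0 = x) (hγd : γ (dist x y) = y)
    (hγ : ∀ s ∈ Icc (0 : ℝ) (dist x y), ∀ t ∈ Icc (0 : ℝ) (dist x y),
      dist (γ s) (γ t) = |s - t|)
    (f : ℝ → T) (hfc : ContinuousOn f (Icc 0 1)) (hfi : InjOn f (Icc 0 1))
    (hf0 : f 0 = x) (hf1 : f 1 = y) :
    f '' Icc 0 1 = {z | dist x z + dist z y = dist x y} := by
  have h01 : (0:ℝ) ≤ 1 := by norm_num
  apply Subset.antisymm
  · -- image ⊆ segment
    rintro q ⟨t0, ht0, rfl⟩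
    by_contra hseg
    simp only [mem_setOf_eq] at hseg
    have htri : dist x y ≤ dist x (f t0) + dist (f t0) y := dist_triangle _ _ _
    have htri2 : dist x (f t0) + dist (f t0) y ≠ dist x y := by
      intro e
      exact hseg (by rw [dist_comm (f t0) y] at e ⊢; exact e)
    have hgt : dist x y < dist x (f t0) + dist (f t0) y :=
      lt_of_le_of_ne htri (Ne.symm htri2)
    set w := f t0 with hwdef
    set c : ℝ := (dist x w + dist x y - dist w y) / 2 with hc
    have hc0 : 0 ≤ c := by
      have := dist_triangle w x y
      rw [dist_comm w x] at this
      simp only [hc]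
      linarith
    have hcd : c ≤ dist x y := by
      have := dist_triangle x y w
      rw [dist_comm y w] at this
      simp only [hc]
      linarith
    set z := γ c with hz
    have hxz : dist x z = c := by
      have := hγ 0 ⟨le_rfl, dist_nonneg⟩ c ⟨hc0, hcd⟩
      rw [hγ0] at this
      rw [hz, this, abs_of_nonpos (by linarith)]
      ring
    have hzy : dist z y = dist x y - c := by
      have := hγ c ⟨hc0, hcd⟩ (dist x y) ⟨dist_nonneg, le_rfl⟩
      rw [hγd] at this
      rw [hz, this, abs_of_nonpos (by linarith)]
      ring
    have hzw : dist z w = dist x w - c := by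
      have hkey := hfp x w z y
      have h1 : dist x w + dist x y - dist w y = 2 * c := by simp only [hc]; ring
      have h2 : dist x y + dist x z - dist y z = 2 * c := by
        have e1 : dist y z = dist z y := dist_comm _ _
        rw [e1, hxz, hzy]; ring
      rw [h1, h2, min_self] at hkey
      have t1 := dist_triangle x z w
      have e2 : dist w z = dist z w := dist_comm _ _
      linarith [hxz]
    have hwz : z ≠ w := by
      intro e
      rw [e, dist_self] at hzw
      have e3 : dist w y = dist y w := dist_comm _ _
      simp only [hc] at hzw
      linarith
    have hz1 : z ∈ f '' Icc 0 t0 := by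
      refine seg_sub hfp f ht0.1 (hfc.mono (Icc_subset_Icc le_rfl ht0.2)) z ?_
      rw [hf0, ← hwdef]
      show dist x z + dist z w = dist x w
      rw [hxz, hzw]
      ring
    have hz2 : z ∈ f '' Icc t0 1 := by
      refine seg_sub hfp f ht0.2 (hfc.mono (Icc_subset_Icc ht0.1 le_rfl)) z ?_
      rw [hf1, ← hwdef]
      show dist w z + dist z y = dist w y
      have e4 : dist w z = dist z w := dist_comm _ _
      rw [e4, hzw, hzy]
      simp only [hc]
      ring
    obtain ⟨t1, ht1, he1⟩ := hz1
    obtain ⟨t2, ht2, he2⟩ := hz2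
    have ht1m : t1 ∈ Icc (0:ℝ) 1 := ⟨ht1.1, ht1.2.trans ht0.2⟩
    have ht2m : t2 ∈ Icc (0:ℝ) 1 := ⟨ht0.1.trans ht2.1, ht2.2⟩
    have : t1 = t2 := hfi ht1m ht2m (by rw [he1, he2])
    have ht12 : t1 = t0 := le_antisymm ht1.2 (this ▸ ht2.1)
    apply hwz
    rw [← he1, ht12, hwdef]
  · -- segment ⊆ image
    rintro z hzs
    simp only [mem_setOf_eq] at hzs
    refine seg_sub hfp f h01 hfc z ?_
    rw [hf0, hf1]
    exact hzs

end arcs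

end TreeAux

theorem stmt7 (σ : ℝ) (hσ : 0 < σ) (ζ : ℝ → ℝ)
    (hcont : ContinuousOn ζ (Icc 0 σ))
    (hnonneg : ∀ s ∈ Icc (0 : ℝ) σ, 0 ≤ ζ s)
    (h0 : ζ 0 = 0) (hσ0 : ζ σ = 0) :
    ∃ (T : Type) (_ : MetricSpace T) (p : Icc (0 : ℝ) σ → T),
      Function.Surjective p ∧
      (∀ a b : Icc (0 : ℝ) σ, dist (p a) (p b) = treeDist ζ a b) ∧
      -- `T` is a geodesic metric space:
      (∀ x y : T, ∃ γ : ℝ → T, γ 0 = x ∧ γ (dist x y) = y ∧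
        ∀ s ∈ Icc (0 : ℝ) (dist x y), ∀ t ∈ Icc (0 : ℝ) (dist x y),
          dist (γ s) (γ t) = |s - t|) ∧
      -- any two points of `T` are joined by an arc ...
      (∀ x y : T, x ≠ y → ∃ f : ℝ → T, ContinuousOn f (Icc 0 1) ∧
        InjOn f (Icc 0 1) ∧ f 0 = x ∧ f 1 = y) ∧
      -- ... which is unique (as a subset of `T`):
      (∀ x y : T, x ≠ y → ∀ f g : ℝ → T,
        (ContinuousOn f (Icc 0 1) ∧ InjOn f (Icc 0 1) ∧ f 0 = x ∧ f 1 = y) →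
        (ContinuousOn g (Icc 0 1) ∧ InjOn g (Icc 0 1) ∧ g 0 = x ∧ g 1 = y) →
        f '' Icc 0 1 = g '' Icc 0 1) := by
  classical
  letI iP : PseudoMetricSpace (TreeAux.W σ) := TreeAux.treePseudo σ ζ hcont hnonneg
  set Tq := SeparationQuotient (TreeAux.W σ) with hTq
  have hde : ∀ a b : TreeAux.W σ, dist a b = treeDist ζ a.val b.val := fun _ _ => rfl
  have hdmk : ∀ a b : TreeAux.W σ,
      dist (SeparationQuotient.mk a) (SeparationQuotient.mk b) = treeDist ζ a.val b.val :=
    fun a b => SeparationQuotient.dist_mk a b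
  have hmkeq : ∀ a b : TreeAux.W σ, treeDist ζ a.val b.val = 0 →
      SeparationQuotient.mk a = SeparationQuotient.mk b := by
    intro a b h
    refine SeparationQuotient.mk_eq_mk.2 (Metric.inseparable_iff.2 ?_)
    rw [hde]
    exact h
  -- the four-point condition
  have hfp : TreeAux.FourPt Tq := by
    intro z a b c
    obtain ⟨p, rfl⟩ := SeparationQuotient.surjective_mk z
    obtain ⟨q, rfl⟩ := SeparationQuotient.surjective_mk a
    obtain ⟨r, rfl⟩ := SeparationQuotient.surjective_mk b
    obtain ⟨s', rfl⟩ := SeparationQuotient.surjective_mk c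
    simp only [hdmk]
    have key := TreeAux.fp (σ := σ) hnonneg q.mem r.mem p.mem s'.mem
    have c1 := TreeAux.mW_comm ζ q.val p.val
    have c2 := TreeAux.mW_comm ζ r.val s'.val
    have c3 := TreeAux.mW_comm ζ r.val p.val
    have c4 := TreeAux.mW_comm ζ q.val s'.val
    simp only [TreeAux.treeDist_def]
    rcases min_le_iff.mp key with h | h
    · refine min_le_iff.mpr (Or.inr ?_)
      linarith
    · refine min_le_iff.mpr (Or.inl ?_)
      linarith
  -- geodesics
  have hgeo : ∀ x y : Tq, ∃ γ : ℝ → Tq, γ 0 = x ∧ γ (dist x y) = y ∧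
      ∀ s ∈ Icc (0 : ℝ) (dist x y), ∀ t ∈ Icc (0 : ℝ) (dist x y),
        dist (γ s) (γ t) = |s - t| := by
    intro x y
    obtain ⟨a, rfl⟩ := SeparationQuotient.surjective_mk x
    obtain ⟨b, rfl⟩ := SeparationQuotient.surjective_mk y
    rcases le_total a.val b.val with hab | hba
    · obtain ⟨P, hPmem, hP0, hPd, hPdist⟩ :=
        TreeAux.geo hcont hnonneg a.mem b.mem hab
      have hdxy : dist (SeparationQuotient.mk a) (SeparationQuotient.mk b) =
          treeDist ζ a.val b.val := hdmk a b
      refine ⟨fun r => SeparationQuotient.mk (TreeAux.W.mk (P r) (hPmem r)), ?_, ?_, ?_⟩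
      · exact (hmkeq a (TreeAux.W.mk (P 0) (hPmem 0)) hP0).symm
      · rw [hdxy]
        exact (hmkeq b (TreeAux.W.mk (P (treeDist ζ a.val b.val))
          (hPmem (treeDist ζ a.val b.val))) hPd).symm
      · rw [hdxy]
        intro u hu v hv
        rw [hdmk]
        rcases le_total u v with huv | hvu
        · rw [hPdist u hu v hv huv, abs_of_nonpos (by linarith), neg_sub]
        · rw [TreeAux.treeDist_comm, hPdist v hv u hu hvu, abs_of_nonneg (by linarith)]
    · obtain ⟨P, hPmem, hP0, hPd, hPdist⟩ :=
        TreeAux.geo hcont hnonneg b.mem a.mem hba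
      have hdxy : dist (SeparationQuotient.mk a) (SeparationQuotient.mk b) =
          treeDist ζ b.val a.val := by
        rw [hdmk, TreeAux.treeDist_comm]
      set d : ℝ := treeDist ζ b.val a.val with hd
      refine ⟨fun r => SeparationQuotient.mk (TreeAux.W.mk (P (d - r)) (hPmem (d - r))), ?_, ?_, ?_⟩
      · show SeparationQuotient.mk (TreeAux.W.mk (P (d - 0)) (hPmem (d - 0))) =
          SeparationQuotient.mk a
        simp only [sub_zero]
        exact (hmkeq a (TreeAux.W.mk (P d) (hPmem d)) hPd).symm
      · rw [hdxy]
        show SeparationQuotient.mk (TreeAux.W.mk (P (d - d)) (hPmem (d - d))) =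
          SeparationQuotient.mk b
        simp only [sub_self]
        exact (hmkeq b (TreeAux.W.mk (P 0) (hPmem 0)) hP0).symm
      · rw [hdxy]
        intro u hu v hv
        rw [hdmk]
        have hu' : d - u ∈ Icc 0 d := ⟨by linarith [hu.2], by linarith [hu.1]⟩
        have hv' : d - v ∈ Icc 0 d := ⟨by linarith [hv.2], by linarith [hv.1]⟩
        rcases le_total u v with huv | hvu
        · rw [TreeAux.treeDist_comm, hPdist (d - v) hv' (d - u) hu' (by linarith),
            abs_of_nonpos (by linarith)]
          ring
        · rw [hPdist (d - u) hu' (d - v) hv' (by linarith), abs_of_nonneg (by linarith)]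
          ring
  refine ⟨Tq, inferInstance,
    fun a => SeparationQuotient.mk (TreeAux.W.mk a.1 a.2), ?_,
    fun a b => hdmk (TreeAux.W.mk a.1 a.2) (TreeAux.W.mk b.1 b.2), hgeo, ?_, ?_⟩
  · intro x
    obtain ⟨w, rfl⟩ := SeparationQuotient.surjective_mk x
    exact ⟨⟨w.val, w.mem⟩, rfl⟩
  · -- existence of arcs
    intro x y hxy
    obtain ⟨γ, hγ0, hγd, hγiso⟩ := hgeo x y
    have hd0 : 0 < dist x y := dist_pos.2 hxy
    have hγlip : LipschitzOnWith 1 γ (Icc 0 (dist x y)) := by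
      refine LipschitzOnWith.of_dist_le_mul ?_
      intro u hu v hv
      rw [hγiso u hu v hv]
      simp [Real.dist_eq]
    have hγcont : ContinuousOn γ (Icc 0 (dist x y)) := hγlip.continuousOn
    have hmaps : MapsTo (fun u : ℝ => u * dist x y) (Icc 0 1) (Icc 0 (dist x y)) := by
      intro u hu
      constructor
      · exact mul_nonneg hu.1 hd0.le
      · show u * dist x y ≤ dist x y
        nlinarith [hu.2, hd0.le, mul_nonneg (sub_nonneg.mpr hu.2) hd0.le]
    refine ⟨fun u => γ (u * dist x y), ?_, ?_, ?_, ?_⟩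
    · exact hγcont.comp (Continuous.continuousOn (by fun_prop)) hmaps
    · intro u hu v hv he
      have h1 : dist (γ (u * dist x y)) (γ (v * dist x y)) = |u * dist x y - v * dist x y| :=
        hγiso _ (hmaps hu) _ (hmaps hv)
      have he' : γ (u * dist x y) = γ (v * dist x y) := he
      rw [he', dist_self] at h1
      have h2 : u * dist x y = v * dist x y := by
        have := abs_eq_zero.mp h1.symm
        linarith
      exact mul_right_cancel₀ (ne_of_gt hd0) h2
    · show γ (0 * dist x y) = x
      rw [zero_mul, hγ0]
    · show γ (1 * dist x y) = y
      rw [one_mul, hγd]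
  · -- uniqueness of arcs
    intro x y hxy f g hf hg
    obtain ⟨γ, hγ0, hγd, hγiso⟩ := hgeo x y
    rw [TreeAux.arc_eq_seg hfp hxy γ hγ0 hγd hγiso f hf.1 hf.2.1 hf.2.2.1 hf.2.2.2,
      TreeAux.arc_eq_seg hfp hxy γ hγ0 hγd hγiso g hg.1 hg.2.1 hg.2.2.1 hg.2.2.2]
end

section
/- Let $\mathbb{M}^{\bullet\bullet\bullet}$ denote the space of isometry classes of compact metric spaces with three marked points, equipped with the marked Gromov–Hausdorff topology. The set of $(M,x_1,x_2,x_3)$ such that $M$ is a geodesic space, the $x_i$ are pairwise distinct, and there exists $w\in M$ with $d(x_i,w)+d(w,x_j)=d(x_i,x_j)$ for all $i\neq j$, is a Borel subset of $\mathbb{M}^{\bullet\bullet\bullet}$. -/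
open Set

/-- A compact metric space with three marked points. -/
structure MarkedSpace where
  X : Type
  [met : MetricSpace X]
  [cpt : CompactSpace X]
  pt : Fin 3 → X

attribute [instance] MarkedSpace.met MarkedSpace.cpt

/-- The marked Gromov–Hausdorff distance, defined via admissible pseudometrics
on the disjoint union: it is the infimum of `r` such that some pseudometric on
`A.X ⊕ B.X` extending both metrics makes the two copies `r`-close in Hausdorff
distance and puts corresponding marked points at distance at most `r`. -/
noncomputable def mghDist (A B : MarkedSpace) : ℝ :=
  sInf { r : ℝ | 0 ≤ r ∧ ∃ d : (A.X ⊕ B.X) → (A.X ⊕ B.X) → ℝ,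
    (∀ p, d p p = 0) ∧ (∀ p q, d p q = d q p) ∧
    (∀ p q s, d p s ≤ d p q + d q s) ∧
    (∀ x y : A.X, d (Sum.inl x) (Sum.inl y) = dist x y) ∧
    (∀ x y : B.X, d (Sum.inr x) (Sum.inr y) = dist x y) ∧
    (∀ x : A.X, ∃ y : B.X, d (Sum.inl x) (Sum.inr y) ≤ r) ∧
    (∀ y : B.X, ∃ x : A.X, d (Sum.inl x) (Sum.inr y) ≤ r) ∧
    (∀ i : Fin 3, d (Sum.inl (A.pt i)) (Sum.inr (B.pt i)) ≤ r) }

/-- The topology of the marked Gromov–Hausdorff (pseudo)distance. -/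
instance : TopologicalSpace MarkedSpace :=
  TopologicalSpace.generateFrom
    { s | ∃ (A : MarkedSpace) (ε : ℝ), 0 < ε ∧ s = { B | mghDist A B < ε } }

/-- The space of isometry classes of triply-pointed compact metric spaces:
the quotient identifying spaces at marked Gromov–Hausdorff distance zero,
with the quotient topology. -/
def MarkedGHSpace : Type 1 := Quot (fun A B : MarkedSpace => mghDist A B = 0)

instance : TopologicalSpace MarkedGHSpace :=
  TopologicalSpace.coinduced (Quot.mk _) inferInstance


open Filter Topology

namespace MGH

def admSet (A B : MarkedSpace) : Set ℝ :=
  { r : ℝ | 0 ≤ r ∧ ∃ d : (A.X ⊕ B.X) → (A.X ⊕ B.X) → ℝ,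
    (∀ p, d p p = 0) ∧ (∀ p q, d p q = d q p) ∧
    (∀ p q s, d p s ≤ d p q + d q s) ∧
    (∀ x y : A.X, d (Sum.inl x) (Sum.inl y) = dist x y) ∧
    (∀ x y : B.X, d (Sum.inr x) (Sum.inr y) = dist x y) ∧
    (∀ x : A.X, ∃ y : B.X, d (Sum.inl x) (Sum.inr y) ≤ r) ∧
    (∀ y : B.X, ∃ x : A.X, d (Sum.inl x) (Sum.inr y) ≤ r) ∧
    (∀ i : Fin 3, d (Sum.inl (A.pt i)) (Sum.inr (B.pt i)) ≤ r) }

lemma mghDist_eq (A B : MarkedSpace) : mghDist A B = sInf (admSet A B) := rfl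

lemma admSet_nonempty (A B : MarkedSpace) : (admSet A B).Nonempty := by
  classical
  set K : ℝ := Metric.diam (univ : Set A.X) + Metric.diam (univ : Set B.X) + 1 with hK
  have hdiamA : ∀ x y : A.X, dist x y ≤ Metric.diam (univ : Set A.X) := fun x y =>
    Metric.dist_le_diam_of_mem isCompact_univ.isBounded (mem_univ x) (mem_univ y)
  have hdiamB : ∀ x y : B.X, dist x y ≤ Metric.diam (univ : Set B.X) := fun x y =>
    Metric.dist_le_diam_of_mem isCompact_univ.isBounded (mem_univ x) (mem_univ y)
  have hK0 : 0 < K := by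
    have := Metric.diam_nonneg (s := (univ : Set A.X))
    have := Metric.diam_nonneg (s := (univ : Set B.X))
    rw [hK]; linarith
  have hdA : ∀ x y : A.X, dist x y ≤ K := fun x y => by
    have h1 := hdiamA x y
    have := Metric.diam_nonneg (s := (univ : Set B.X))
    rw [hK]; linarith
  have hdB : ∀ x y : B.X, dist x y ≤ K := fun x y => by
    have h1 := hdiamB x y
    have := Metric.diam_nonneg (s := (univ : Set A.X))
    rw [hK]; linarith
  refine ⟨K, le_of_lt hK0, fun p q => match p, q with
    | Sum.inl x, Sum.inl y => dist x y
    | Sum.inr x, Sum.inr y => dist x y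
    | Sum.inl _, Sum.inr _ => K
    | Sum.inr _, Sum.inl _ => K, ?_, ?_, ?_, ?_, ?_, ?_, ?_, ?_⟩
  · rintro (x | x) <;> simp
  · rintro (x | x) (y | y) <;> simp [dist_comm]
  · rintro (x | x) (y | y) (z | z) <;> simp <;>
      first
        | exact dist_triangle _ _ _
        | (have := dist_nonneg (x := x) (y := y); linarith)
        | (have := dist_nonneg (x := y) (y := z); linarith)
        | (have h1 := hdA x z; linarith)
        | (have h1 := hdB x z; linarith)
        | linarith [hK0.le]
  · intro x y; rfl
  · intro x y; rfl
  · intro x; exact ⟨B.pt 0, le_refl _⟩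
  · intro y; exact ⟨A.pt 0, le_refl _⟩
  · intro i; exact le_refl _

lemma admSet_bddBelow (A B : MarkedSpace) : BddBelow (admSet A B) :=
  ⟨0, fun _ hr => hr.1⟩

lemma mghDist_nonneg (A B : MarkedSpace) : 0 ≤ mghDist A B := by
  rw [mghDist_eq]
  exact le_csInf (admSet_nonempty A B) fun _ hr => hr.1

lemma mghDist_le (A B : MarkedSpace) {r : ℝ} (hr : r ∈ admSet A B) : mghDist A B ≤ r := by
  rw [mghDist_eq]; exact csInf_le (admSet_bddBelow A B) hr

lemma exists_adm_lt (A B : MarkedSpace) {ε : ℝ} (h : mghDist A B < ε) :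
    ∃ r ∈ admSet A B, r < ε := by
  rw [mghDist_eq] at h
  exact exists_lt_of_csInf_lt (admSet_nonempty A B) h

lemma mghDist_self (A : MarkedSpace) : mghDist A A = 0 := by
  refine le_antisymm (mghDist_le A A ?_) (mghDist_nonneg A A)
  refine ⟨le_refl _, fun p q => dist (Sum.elim id id p) (Sum.elim id id q),
    ?_, ?_, ?_, ?_, ?_, ?_, ?_, ?_⟩
  · intro p; simp
  · intro p q; simp [dist_comm]
  · intro p q s; exact dist_triangle _ _ _
  · intro x y; rfl
  · intro x y; rfl
  · intro x; exact ⟨x, by simp⟩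
  · intro y; exact ⟨y, by simp⟩
  · intro i; simp

lemma adm_swap {A B : MarkedSpace} {r : ℝ} (hr : r ∈ admSet A B) : r ∈ admSet B A := by
  obtain ⟨hr0, d, hrefl, hsymm, htri, hA, hB, hAB, hBA, hpt⟩ := hr
  refine ⟨hr0, fun p q => d p.swap q.swap, ?_, ?_, ?_, ?_, ?_, ?_, ?_, ?_⟩
  · intro p; exact hrefl _
  · intro p q; exact hsymm _ _
  · intro p q s; exact htri _ _ _
  · intro x y; exact hB x y
  · intro x y; exact hA x y
  · intro x; obtain ⟨y, hy⟩ := hBA x; exact ⟨y, by simpa [hsymm] using hy⟩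
  · intro y; obtain ⟨x, hx⟩ := hAB y; exact ⟨x, by simpa [hsymm] using hx⟩
  · intro i; simpa [hsymm] using hpt i

lemma mghDist_comm (A B : MarkedSpace) : mghDist A B = mghDist B A := by
  rw [mghDist_eq, mghDist_eq]
  congr 1
  exact Set.Subset.antisymm (fun r hr => adm_swap hr) (fun r hr => adm_swap hr)


end MGH

def HasMidpoints (M : Type*) [MetricSpace M] : Prop :=
  ∀ a b : M, ∃ m : M, dist a m = dist a b / 2 ∧ dist m b = dist a b / 2

namespace MGH

structure Adm (A B : MarkedSpace) (r : ℝ) where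
  d : (A.X ⊕ B.X) → (A.X ⊕ B.X) → ℝ
  symm : ∀ p q, d p q = d q p
  tri : ∀ p q s, d p s ≤ d p q + d q s
  resA : ∀ x y : A.X, d (Sum.inl x) (Sum.inl y) = dist x y
  resB : ∀ x y : B.X, d (Sum.inr x) (Sum.inr y) = dist x y
  corrAB : ∀ x : A.X, ∃ y : B.X, d (Sum.inl x) (Sum.inr y) ≤ r
  corrBA : ∀ y : B.X, ∃ x : A.X, d (Sum.inl x) (Sum.inr y) ≤ r
  mark : ∀ i, d (Sum.inl (A.pt i)) (Sum.inr (B.pt i)) ≤ r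

lemma adm_of_mem {A B : MarkedSpace} {r : ℝ} (h : r ∈ admSet A B) :
    Nonempty (Adm A B r) := by
  obtain ⟨h0, d, h1, h2, h3, h4, h5, h6, h7, h8⟩ := h
  exact ⟨⟨d, h2, h3, h4, h5, h6, h7, h8⟩⟩

lemma Adm.est {A B : MarkedSpace} {r : ℝ} (D : Adm A B r) {x x' : A.X} {y y' : B.X}
    (h1 : D.d (Sum.inl x) (Sum.inr y) ≤ r) (h2 : D.d (Sum.inl x') (Sum.inr y') ≤ r) :
    |dist x x' - dist y y'| ≤ 2 * r := by
  have t1 : dist x x' ≤ r + dist y y' + r := by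
    calc dist x x' = D.d (Sum.inl x) (Sum.inl x') := (D.resA x x').symm
      _ ≤ D.d (Sum.inl x) (Sum.inr y) + D.d (Sum.inr y) (Sum.inl x') := D.tri _ _ _
      _ ≤ D.d (Sum.inl x) (Sum.inr y) +
          (D.d (Sum.inr y) (Sum.inr y') + D.d (Sum.inr y') (Sum.inl x')) := by
            have := D.tri (Sum.inr y : A.X ⊕ B.X) (Sum.inr y') (Sum.inl x')
            linarith
      _ ≤ r + (dist y y' + r) := by
            rw [D.resB, D.symm (Sum.inr y') (Sum.inl x')]
            exact add_le_add h1 (add_le_add le_rfl h2)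
      _ = r + dist y y' + r := by ring
  have t2 : dist y y' ≤ r + dist x x' + r := by
    calc dist y y' = D.d (Sum.inr y) (Sum.inr y') := (D.resB y y').symm
      _ ≤ D.d (Sum.inr y) (Sum.inl x) + D.d (Sum.inl x) (Sum.inr y') := D.tri _ _ _
      _ ≤ D.d (Sum.inr y) (Sum.inl x) +
          (D.d (Sum.inl x) (Sum.inl x') + D.d (Sum.inl x') (Sum.inr y')) := by
            have := D.tri (Sum.inl x : A.X ⊕ B.X) (Sum.inl x') (Sum.inr y')
            linarith
      _ ≤ r + (dist x x' + r) := by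
            rw [D.resA, D.symm (Sum.inr y) (Sum.inl x)]
            exact add_le_add h1 (add_le_add le_rfl h2)
      _ = r + dist x x' + r := by ring
  exact abs_le.2 ⟨by linarith, by linarith⟩

end MGH

def GoodRep (A : MarkedSpace) : Prop :=
  HasMidpoints A.X ∧ ∃ w : A.X, ∀ i j : Fin 3, i ≠ j →
    dist (A.pt i) w + dist w (A.pt j) = dist (A.pt i) (A.pt j)

namespace MGH

lemma tendsto_six : Tendsto (fun n : ℕ => 6 * (1 / ((n : ℝ) + 1))) atTop (𝓝 0) := by
  have := tendsto_one_div_add_atTop_nhds_zero_nat.const_mul (6:ℝ)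
  simpa using this

lemma tendsto_three : Tendsto (fun n : ℕ => 3 * (1 / ((n : ℝ) + 1))) atTop (𝓝 0) := by
  have := tendsto_one_div_add_atTop_nhds_zero_nat.const_mul (3:ℝ)
  simpa using this

lemma inv_succ_le {φ : ℕ → ℕ} (hφ : StrictMono φ) (n : ℕ) :
    (1 : ℝ) / (φ n + 1) ≤ 1 / (n + 1) := by
  apply div_le_div_of_nonneg_left (by norm_num) (by positivity)
  have h1 : (n : ℝ) ≤ φ n := by exact_mod_cast hφ.le_apply
  linarith

lemma good_of_approx (B : MarkedSpace)
    (H : ∀ ε : ℝ, 0 < ε → ∃ A : MarkedSpace, mghDist B A < ε ∧ GoodRep A) :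
    GoodRep B := by
  have Hn : ∀ n : ℕ, ∃ A : MarkedSpace, mghDist B A < 1 / ((n : ℝ) + 1) ∧ GoodRep A :=
    fun n => H _ (by positivity)
  constructor
  · -- midpoints
    intro a b
    have key : ∀ n : ℕ, ∃ m : B.X,
        |dist a m - dist a b / 2| ≤ 3 * (1 / ((n : ℝ) + 1)) ∧
        |dist m b - dist a b / 2| ≤ 3 * (1 / ((n : ℝ) + 1)) := by
      intro n
      obtain ⟨A, hA, hgood⟩ := Hn n
      obtain ⟨r, hrmem, hrlt⟩ := exists_adm_lt B A hA
      obtain ⟨D⟩ := adm_of_mem hrmem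
      obtain ⟨a', ha'⟩ := D.corrAB a
      obtain ⟨b', hb'⟩ := D.corrAB b
      obtain ⟨m', hm'1, hm'2⟩ := hgood.1 a' b'
      obtain ⟨m, hm⟩ := D.corrBA m'
      have e1 := D.est ha' hm
      have e2 := D.est hm hb'
      have e3 := D.est ha' hb'
      rw [abs_le] at e1 e2 e3
      rw [hm'1] at e1
      rw [hm'2] at e2
      refine ⟨m, abs_le.2 ⟨?_, ?_⟩, abs_le.2 ⟨?_, ?_⟩⟩ <;>
        linarith [e1.1, e1.2, e2.1, e2.2, e3.1, e3.2]
    choose m hm1 hm2 using key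
    obtain ⟨mlim, φ, hφ, hconv⟩ := CompactSpace.tendsto_subseq m
    refine ⟨mlim, ?_, ?_⟩
    · have lim1 : Tendsto (fun n => dist a (m (φ n))) atTop (𝓝 (dist a mlim)) :=
        tendsto_const_nhds.dist hconv
      have lim2 : Tendsto (fun n => dist a (m (φ n))) atTop (𝓝 (dist a b / 2)) := by
        have h0 : Tendsto (fun n => dist a (m (φ n)) - dist a b / 2) atTop (𝓝 0) := by
          apply squeeze_zero_norm (a := fun n : ℕ => 3 * (1 / ((n : ℝ) + 1))) _ tendsto_three
          intro n
          rw [Real.norm_eq_abs]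
          exact le_trans (hm1 (φ n)) (by
            have := inv_succ_le hφ n; linarith)
        simpa using h0.add (tendsto_const_nhds (x := dist a b / 2))
      exact tendsto_nhds_unique lim1 lim2
    · have lim1 : Tendsto (fun n => dist (m (φ n)) b) atTop (𝓝 (dist mlim b)) :=
        hconv.dist tendsto_const_nhds
      have lim2 : Tendsto (fun n => dist (m (φ n)) b) atTop (𝓝 (dist a b / 2)) := by
        have h0 : Tendsto (fun n => dist (m (φ n)) b - dist a b / 2) atTop (𝓝 0) := by
          apply squeeze_zero_norm (a := fun n : ℕ => 3 * (1 / ((n : ℝ) + 1))) _ tendsto_three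
          intro n
          rw [Real.norm_eq_abs]
          exact le_trans (hm2 (φ n)) (by
            have := inv_succ_le hφ n; linarith)
        simpa using h0.add (tendsto_const_nhds (x := dist a b / 2))
      exact tendsto_nhds_unique lim1 lim2
  · -- tripod
    have key : ∀ n : ℕ, ∃ w : B.X, ∀ i j : Fin 3, i ≠ j →
        |dist (B.pt i) w + dist w (B.pt j) - dist (B.pt i) (B.pt j)| ≤
          6 * (1 / ((n : ℝ) + 1)) := by
      intro n
      obtain ⟨A, hA, hgood⟩ := Hn n
      obtain ⟨r, hrmem, hrlt⟩ := exists_adm_lt B A hA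
      obtain ⟨D⟩ := adm_of_mem hrmem
      obtain ⟨w', hw'⟩ := hgood.2
      obtain ⟨w, hw⟩ := D.corrBA w'
      have hr0 : 0 ≤ r := hrmem.1
      refine ⟨w, fun i j hij => ?_⟩
      have e1 := D.est (D.mark i) hw
      have e2 := D.est hw (D.mark j)
      have e3 := D.est (D.mark i) (D.mark j)
      have := hw' i j hij
      rw [abs_le] at e1 e2 e3
      refine abs_le.2 ⟨by linarith [e1.1, e2.1, e3.2], by linarith [e1.2, e2.2, e3.1]⟩
    choose w hwkey using key
    obtain ⟨wlim, φ, hφ, hconv⟩ := CompactSpace.tendsto_subseq w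
    refine ⟨wlim, fun i j hij => ?_⟩
    have lim1 : Tendsto (fun n => dist (B.pt i) (w (φ n)) + dist (w (φ n)) (B.pt j)) atTop
        (𝓝 (dist (B.pt i) wlim + dist wlim (B.pt j))) :=
      (tendsto_const_nhds.dist hconv).add (hconv.dist tendsto_const_nhds)
    have lim2 : Tendsto (fun n => dist (B.pt i) (w (φ n)) + dist (w (φ n)) (B.pt j)) atTop
        (𝓝 (dist (B.pt i) (B.pt j))) := by
      have h0 : Tendsto (fun n => dist (B.pt i) (w (φ n)) + dist (w (φ n)) (B.pt j)
          - dist (B.pt i) (B.pt j)) atTop (𝓝 0) := by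
        apply squeeze_zero_norm (a := fun n : ℕ => 6 * (1 / ((n : ℝ) + 1))) _ tendsto_six
        intro n
        rw [Real.norm_eq_abs]
        exact le_trans (hwkey (φ n) i j hij) (by
          have := inv_succ_le hφ n; linarith)
      simpa using h0.add (tendsto_const_nhds (x := dist (B.pt i) (B.pt j)))
    exact tendsto_nhds_unique lim1 lim2

lemma good_of_zero {A B : MarkedSpace} (h : mghDist A B = 0) (hB : GoodRep B) : GoodRep A :=
  good_of_approx A (fun ε hε => ⟨B, by rw [h]; exact hε, hB⟩)

lemma markdist_eq_of_zero {A B : MarkedSpace} (h : mghDist A B = 0) (i j : Fin 3) :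
    dist (A.pt i) (A.pt j) = dist (B.pt i) (B.pt j) := by
  by_contra hne
  set c := |dist (A.pt i) (A.pt j) - dist (B.pt i) (B.pt j)| with hc
  have hc0 : 0 < c := abs_pos.2 (sub_ne_zero.2 hne)
  have hlt : mghDist A B < c / 3 := by rw [h]; linarith
  obtain ⟨r, hrmem, hrlt⟩ := exists_adm_lt A B hlt
  obtain ⟨D⟩ := adm_of_mem hrmem
  have := D.est (D.mark i) (D.mark j)
  rw [← hc] at this
  linarith

end MGH

namespace MidGeo

variable {M : Type*} [MetricSpace M]

noncomputable def midp (h : HasMidpoints M) (a b : M) : M := (h a b).choose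

lemma midp_left (h : HasMidpoints M) (a b : M) :
    dist a (midp h a b) = dist a b / 2 := (h a b).choose_spec.1

lemma midp_right (h : HasMidpoints M) (a b : M) :
    dist (midp h a b) b = dist a b / 2 := (h a b).choose_spec.2

noncomputable def refine (h : HasMidpoints M) (c : ℕ → M) : ℕ → M :=
  fun k => if Even k then c (k / 2) else midp h (c (k / 2)) (c (k / 2 + 1))

lemma refine_even (h : HasMidpoints M) (c : ℕ → M) (i : ℕ) :
    refine h c (2 * i) = c i := by
  simp [refine, even_two_mul i, Nat.mul_div_cancel_left i (by norm_num : 0 < 2)]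

lemma refine_odd (h : HasMidpoints M) (c : ℕ → M) (i : ℕ) :
    refine h c (2 * i + 1) = midp h (c i) (c (i + 1)) := by
  have h1 : ¬ Even (2 * i + 1) := by simp [parity_simps]
  have h2 : (2 * i + 1) / 2 = i := by omega
  simp [refine, h1, h2]

lemma refine_spec_le (h : HasMidpoints M) {c : ℕ → M} {N : ℕ} {e : ℝ} (he : 0 ≤ e)
    (hc : ∀ k l, k ≤ N → l ≤ N → dist (c k) (c l) = |(k : ℝ) - l| * e)
    {k l : ℕ} (hkl : k ≤ l) (hl : l ≤ 2 * N) :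
    dist (refine h c k) (refine h c l) = |(k : ℝ) - l| * (e / 2) := by
  have habs : ∀ i j : ℕ, i ≤ j → |(i : ℝ) - j| = (j : ℝ) - i := by
    intro i j hij
    have hij' : (i:ℝ) ≤ j := by exact_mod_cast hij
    rw [abs_sub_comm, abs_of_nonneg (sub_nonneg.2 hij')]
  rcases Nat.even_or_odd k with ⟨i, hi⟩ | ⟨i, hi⟩ <;>
    rcases Nat.even_or_odd l with ⟨j, hj⟩ | ⟨j, hj⟩
  · -- even, even
    subst hi hj
    rw [show i + i = 2 * i by ring, show j + j = 2 * j by ring,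
      refine_even, refine_even, hc i j (by omega) (by omega)]
    push_cast
    rw [habs i j (by omega), show ((2:ℝ) * i - 2 * j) = 2 * ((i:ℝ) - j) by ring,
      abs_mul, habs i j (by omega)]
    · rw [abs_of_nonneg (by norm_num : (0:ℝ) ≤ 2)]; ring
  · -- even k = 2i, odd l = 2j+1, i ≤ j
    subst hi hj
    have hij : i ≤ j := by omega
    have hjN : j + 1 ≤ N := by omega
    rw [show i + i = 2 * i by ring, refine_even, refine_odd]
    have h1 : dist (c j) (midp h (c j) (c (j+1))) = e / 2 := by
      rw [midp_left, hc j (j+1) (by omega) (by omega)]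
      rw [habs j (j+1) (by omega)]; push_cast; ring
    have h2 : dist (midp h (c j) (c (j+1))) (c (j+1)) = e / 2 := by
      rw [midp_right, hc j (j+1) (by omega) (by omega)]
      rw [habs j (j+1) (by omega)]; push_cast; ring
    have hup : dist (c i) (midp h (c j) (c (j+1))) ≤ ((j:ℝ) - i) * e + e / 2 := by
      calc dist (c i) (midp h (c j) (c (j+1)))
          ≤ dist (c i) (c j) + dist (c j) (midp h (c j) (c (j+1))) := dist_triangle _ _ _
        _ = ((j:ℝ) - i) * e + e / 2 := by
            rw [hc i j (by omega) (by omega), habs i j hij, h1]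
    have hlo : ((j:ℝ) + 1 - i) * e ≤ dist (c i) (midp h (c j) (c (j+1))) + e / 2 := by
      have := dist_triangle (c i) (midp h (c j) (c (j+1))) (c (j+1))
      rw [hc i (j+1) (by omega) (by omega), habs i (j+1) (by omega)] at this
      push_cast at this ⊢; linarith [h2]
    have : dist (c i) (midp h (c j) (c (j+1))) = ((j:ℝ) - i) * e + e / 2 := le_antisymm hup (by linarith)
    rw [this, habs (2*i) (2*j+1) (by omega)]; push_cast; ring
  · -- odd k = 2i+1, even l = 2j, i+1 ≤ j
    subst hi hj
    have hij : i + 1 ≤ j := by omega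
    rw [show j + j = 2 * j by ring, refine_even, refine_odd]
    have h1 : dist (c i) (midp h (c i) (c (i+1))) = e / 2 := by
      rw [midp_left, hc i (i+1) (by omega) (by omega), habs i (i+1) (by omega)]
      push_cast; ring
    have h2 : dist (midp h (c i) (c (i+1))) (c (i+1)) = e / 2 := by
      rw [midp_right, hc i (i+1) (by omega) (by omega), habs i (i+1) (by omega)]
      push_cast; ring
    have hup : dist (midp h (c i) (c (i+1))) (c j) ≤ e / 2 + ((j:ℝ) - (i+1)) * e := by
      calc dist (midp h (c i) (c (i+1))) (c j)
          ≤ dist (midp h (c i) (c (i+1))) (c (i+1)) + dist (c (i+1)) (c j) := dist_triangle _ _ _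
        _ = e / 2 + ((j:ℝ) - (i+1)) * e := by
            rw [h2, hc (i+1) j (by omega) (by omega), habs (i+1) j hij]; push_cast; ring_nf
    have hlo : ((j:ℝ) - i) * e ≤ e / 2 + dist (midp h (c i) (c (i+1))) (c j) := by
      have := dist_triangle (c i) (midp h (c i) (c (i+1))) (c j)
      rw [hc i j (by omega) (by omega), habs i j (by omega)] at this
      linarith [h1]
    have : dist (midp h (c i) (c (i+1))) (c j) = e / 2 + ((j:ℝ) - (i+1)) * e :=
      le_antisymm hup (by push_cast at hlo ⊢; linarith)
    rw [this, habs (2*i+1) (2*j) (by omega)]; push_cast; ring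
  · -- odd, odd
    subst hi hj
    have hij : i ≤ j := by omega
    rw [refine_odd, refine_odd]
    rcases eq_or_lt_of_le hij with rfl | hij'
    · simp
    have h1 : dist (c i) (midp h (c i) (c (i+1))) = e / 2 := by
      rw [midp_left, hc i (i+1) (by omega) (by omega), habs i (i+1) (by omega)]
      push_cast; ring
    have h2 : dist (midp h (c i) (c (i+1))) (c (i+1)) = e / 2 := by
      rw [midp_right, hc i (i+1) (by omega) (by omega), habs i (i+1) (by omega)]
      push_cast; ring
    have h3 : dist (c j) (midp h (c j) (c (j+1))) = e / 2 := by
      rw [midp_left, hc j (j+1) (by omega) (by omega), habs j (j+1) (by omega)]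
      push_cast; ring
    have h4 : dist (midp h (c j) (c (j+1))) (c (j+1)) = e / 2 := by
      rw [midp_right, hc j (j+1) (by omega) (by omega), habs j (j+1) (by omega)]
      push_cast; ring
    have hup : dist (midp h (c i) (c (i+1))) (midp h (c j) (c (j+1))) ≤ ((j:ℝ) - i) * e := by
      calc dist (midp h (c i) (c (i+1))) (midp h (c j) (c (j+1)))
          ≤ dist (midp h (c i) (c (i+1))) (c (i+1)) + dist (c (i+1)) (c j)
            + dist (c j) (midp h (c j) (c (j+1))) := dist_triangle4 _ _ _ _
        _ = e / 2 + ((j:ℝ) - (i+1)) * e + e / 2 := by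
            rw [h2, h3, hc (i+1) j (by omega) (by omega), habs (i+1) j (by omega)]
            push_cast; ring_nf
        _ = ((j:ℝ) - i) * e := by ring
    have hlo : ((j:ℝ) + 1 - i) * e ≤ e / 2 + dist (midp h (c i) (c (i+1))) (midp h (c j) (c (j+1))) + e / 2 := by
      have := dist_triangle4 (c i) (midp h (c i) (c (i+1))) (midp h (c j) (c (j+1))) (c (j+1))
      rw [hc i (j+1) (by omega) (by omega), habs i (j+1) (by omega)] at this
      push_cast at this ⊢; linarith [h1, h4]
    have : dist (midp h (c i) (c (i+1))) (midp h (c j) (c (j+1))) = ((j:ℝ) - i) * e :=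
      le_antisymm hup (by linarith)
    rw [this, habs (2*i+1) (2*j+1) (by omega)]; push_cast; ring

lemma refine_spec (h : HasMidpoints M) {c : ℕ → M} {N : ℕ} {e : ℝ} (he : 0 ≤ e)
    (hc : ∀ k l, k ≤ N → l ≤ N → dist (c k) (c l) = |(k : ℝ) - l| * e) :
    ∀ k l, k ≤ 2 * N → l ≤ 2 * N →
      dist (refine h c k) (refine h c l) = |(k : ℝ) - l| * (e / 2) := by
  intro k l hk hl
  rcases le_total k l with hkl | hkl
  · exact refine_spec_le h he hc hkl hl
  · rw [dist_comm, abs_sub_comm]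
    exact refine_spec_le h he hc hkl hk


noncomputable def grid (h : HasMidpoints M) (a b : M) : ℕ → ℕ → M :=
  fun n => (refine h)^[n] (fun k => if k = 0 then a else b)

lemma grid_succ (h : HasMidpoints M) (a b : M) (n : ℕ) :
    grid h a b (n + 1) = refine h (grid h a b n) :=
  Function.iterate_succ_apply' _ _ _

lemma grid_spec (h : HasMidpoints M) (a b : M) :
    ∀ n, ∀ k l, k ≤ 2 ^ n → l ≤ 2 ^ n →
      dist (grid h a b n k) (grid h a b n l) = |(k : ℝ) - l| * (dist a b / 2 ^ n) := by
  intro n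
  induction n with
  | zero =>
    intro k l hk hl
    interval_cases k <;> interval_cases l <;>
      simp [grid, dist_comm] <;> norm_num
  | succ n ih =>
    intro k l hk hl
    rw [grid_succ]
    have he : (0:ℝ) ≤ dist a b / 2 ^ n := by positivity
    have h2 : (2:ℕ) ^ (n+1) = 2 * 2 ^ n := by ring
    rw [h2] at hk hl
    have := refine_spec h he (ih) k l hk hl
    rw [this]
    congr 1
    rw [pow_succ]
    ring

lemma grid_zero (h : HasMidpoints M) (a b : M) (n : ℕ) : grid h a b n 0 = a := by
  induction n with
  | zero => simp [grid]
  | succ n ih =>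
    rw [grid_succ]
    simpa using (refine_even h (grid h a b n) 0).trans ih

lemma grid_top (h : HasMidpoints M) (a b : M) (n : ℕ) : grid h a b n (2 ^ n) = b := by
  induction n with
  | zero => simp [grid]
  | succ n ih =>
    rw [grid_succ, pow_succ, mul_comm (2^n) 2, refine_even]
    exact ih

lemma grid_level (h : HasMidpoints M) (a b : M) (n m k : ℕ) :
    grid h a b (n + m) (k * 2 ^ m) = grid h a b n k := by
  induction m with
  | zero => simp
  | succ m ih =>
    have : k * 2 ^ (m + 1) = 2 * (k * 2 ^ m) := by ring
    rw [show n + (m+1) = (n + m) + 1 by ring, this, grid_succ, refine_even]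
    exact ih

noncomputable def kn (D t : ℝ) (n : ℕ) : ℕ := ⌊t * 2 ^ n / D⌋₊

lemma kn_le {D t : ℝ} (hD : 0 < D) (ht : t ≤ D) (n : ℕ) : kn D t n ≤ 2 ^ n := by
  have hu : t * 2 ^ n / D ≤ ((2 ^ n : ℕ) : ℝ) := by
    rw [div_le_iff₀ hD]
    push_cast
    calc t * 2 ^ n ≤ D * 2 ^ n := by nlinarith [pow_pos (by norm_num : (0:ℝ) < 2) n]
      _ = 2 ^ n * D := by ring
  calc kn D t n ≤ ⌊((2 ^ n : ℕ) : ℝ)⌋₊ := Nat.floor_mono hu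
    _ = 2 ^ n := Nat.floor_natCast _

lemma kn_approx {D t : ℝ} (hD : 0 < D) (ht0 : 0 ≤ t) (n : ℕ) :
    |(kn D t n : ℝ) * (D / 2 ^ n) - t| ≤ D / 2 ^ n := by
  set u := t * 2 ^ n / D with hu
  have hu0 : 0 ≤ u := by positivity
  have h1 : ((⌊u⌋₊ : ℕ) : ℝ) ≤ u := Nat.floor_le hu0
  have h2 : u < ⌊u⌋₊ + 1 := Nat.lt_floor_add_one u
  have hpow : (0:ℝ) < 2 ^ n := by positivity
  have ht' : t = u * (D / 2 ^ n) := by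
    field_simp [hu]
    rw [hu, div_mul_cancel₀ _ (ne_of_gt hD)]
  have hk : kn D t n = ⌊u⌋₊ := rfl
  have : |(kn D t n : ℝ) * (D / 2 ^ n) - t| = |(⌊u⌋₊ : ℝ) - u| * (D / 2 ^ n) := by
    rw [hk, ht', show ((⌊u⌋₊:ℝ) * (D / 2 ^ n) - u * (D / 2 ^ n)) = ((⌊u⌋₊:ℝ) - u) * (D / 2 ^ n) by ring,
      abs_mul, abs_of_nonneg (le_of_lt (by positivity : (0:ℝ) < D / 2 ^ n))]
  rw [this]
  have habs : |(⌊u⌋₊ : ℝ) - u| ≤ 1 := abs_le.2 ⟨by linarith, by linarith⟩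
  calc |(⌊u⌋₊ : ℝ) - u| * (D / 2 ^ n) ≤ 1 * (D / 2 ^ n) :=
        mul_le_mul_of_nonneg_right habs (by positivity)
    _ = D / 2 ^ n := one_mul _

lemma grid_dist (h : HasMidpoints M) (a b : M) (hD : 0 < dist a b)
    {s t : ℝ} (hs : s ∈ Icc 0 (dist a b)) (ht : t ∈ Icc 0 (dist a b)) (n m : ℕ) :
    dist (grid h a b n (kn (dist a b) s n)) (grid h a b m (kn (dist a b) t m)) =
      |(kn (dist a b) s n : ℝ) * (dist a b / 2 ^ n) -
        (kn (dist a b) t m : ℝ) * (dist a b / 2 ^ m)| := by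
  set D := dist a b with hDdef
  set K := kn D s n with hK0
  set L := kn D t m with hL0
  have hK : K ≤ 2 ^ n := kn_le hD hs.2 n
  have hL : L ≤ 2 ^ m := kn_le hD ht.2 m
  have e1 : grid h a b (n + m) (K * 2 ^ m) = grid h a b n K := grid_level h a b n m K
  have e2 : grid h a b (n + m) (L * 2 ^ n) = grid h a b m L := by
    rw [add_comm]; exact grid_level h a b m n L
  have hK' : K * 2 ^ m ≤ 2 ^ (n + m) := by
    rw [pow_add]; exact Nat.mul_le_mul_right _ hK
  have hL' : L * 2 ^ n ≤ 2 ^ (n + m) := by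
    rw [pow_add, mul_comm ((2:ℕ) ^ n)]; exact Nat.mul_le_mul_right _ hL
  rw [← e1, ← e2, grid_spec h a b (n + m) _ _ hK' hL']
  have key : (K : ℝ) * (D / 2 ^ n) - (L : ℝ) * (D / 2 ^ m) =
      (((K * 2 ^ m : ℕ) : ℝ) - ((L * 2 ^ n : ℕ) : ℝ)) * (D / 2 ^ (n + m)) := by
    push_cast
    rw [pow_add]
    field_simp
  rw [key, abs_mul, abs_of_nonneg (le_of_lt (by positivity : (0:ℝ) < D / 2 ^ (n + m)))]

noncomputable def clamp (D t : ℝ) : ℝ := max 0 (min t D)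

lemma clamp_mem {D : ℝ} (hD : 0 ≤ D) (t : ℝ) : clamp D t ∈ Icc 0 D :=
  ⟨le_max_left _ _, max_le hD (min_le_right _ _)⟩

lemma clamp_eq {D t : ℝ} (ht : t ∈ Icc 0 D) : clamp D t = t := by
  rw [clamp, min_eq_left ht.2, max_eq_right ht.1]

noncomputable def dseq (h : HasMidpoints M) (a b : M) (t : ℝ) : ℕ → M :=
  fun n => grid h a b n (kn (dist a b) (clamp (dist a b) t) n)

lemma dseq_cauchy (h : HasMidpoints M) (a b : M) (hD : 0 < dist a b) (t : ℝ) :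
    CauchySeq (dseq h a b t) := by
  set D := dist a b with hDdef
  have hmem := clamp_mem (le_of_lt hD) t
  apply cauchySeq_of_le_geometric_two (C := 4 * D)
  intro n
  have h1 := kn_approx (t := clamp D t) hD hmem.1 n
  have h2 := kn_approx (t := clamp D t) hD hmem.1 (n + 1)
  have h3 := grid_dist h a b hD hmem hmem n (n + 1)
  have hpos : (0:ℝ) < D / 2 ^ n := by positivity
  have hhalf : D / 2 ^ (n + 1) ≤ D / 2 ^ n := by
    apply div_le_div_of_nonneg_left (le_of_lt hD) (by positivity)
    exact pow_le_pow_right₀ (by norm_num) (by omega)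
  calc dist (dseq h a b t n) (dseq h a b t (n + 1))
      = |(kn D (clamp D t) n : ℝ) * (D / 2 ^ n) -
          (kn D (clamp D t) (n + 1) : ℝ) * (D / 2 ^ (n + 1))| := h3
    _ ≤ |(kn D (clamp D t) n : ℝ) * (D / 2 ^ n) - clamp D t| +
        |clamp D t - (kn D (clamp D t) (n + 1) : ℝ) * (D / 2 ^ (n + 1))| := by
          exact abs_sub_le _ _ _
    _ ≤ D / 2 ^ n + D / 2 ^ (n + 1) := by
          rw [abs_sub_comm (clamp D t)]
          exact add_le_add h1 h2
    _ ≤ 4 * D / 2 / 2 ^ n := by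
          rw [show (4:ℝ) * D / 2 / 2 ^ n = D / 2 ^ n + D / 2 ^ n by ring]
          exact add_le_add le_rfl hhalf

variable [CompleteSpace M]

noncomputable def geod (h : HasMidpoints M) (a b : M) (hD : 0 < dist a b) (t : ℝ) : M :=
  (cauchySeq_tendsto_of_complete (dseq_cauchy h a b hD t)).choose

lemma geod_tendsto (h : HasMidpoints M) (a b : M) (hD : 0 < dist a b) (t : ℝ) :
    Tendsto (dseq h a b t) atTop (𝓝 (geod h a b hD t)) :=
  (cauchySeq_tendsto_of_complete (dseq_cauchy h a b hD t)).choose_spec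

lemma tendsto_halfpow (D : ℝ) : Tendsto (fun n : ℕ => D / 2 ^ n) atTop (𝓝 0) := by
  have : (fun n : ℕ => D / 2 ^ n) = fun n : ℕ => D * (1/2 : ℝ) ^ n := by
    funext n; rw [div_eq_mul_inv, one_div, inv_pow]
  rw [this]
  have := (tendsto_pow_atTop_nhds_zero_of_lt_one (by norm_num : (0:ℝ) ≤ 1/2)
    (by norm_num : (1/2 : ℝ) < 1)).const_mul D
  simpa using this

lemma tendsto_kn {D t : ℝ} (hD : 0 < D) (ht : t ∈ Icc 0 D) :
    Tendsto (fun n : ℕ => (kn D t n : ℝ) * (D / 2 ^ n)) atTop (𝓝 t) := by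
  have hb : ∀ n : ℕ, ‖(kn D t n : ℝ) * (D / 2 ^ n) - t‖ ≤ D / 2 ^ n := by
    intro n
    rw [Real.norm_eq_abs]
    exact kn_approx hD ht.1 n
  have h0 : Tendsto (fun n : ℕ => (kn D t n : ℝ) * (D / 2 ^ n) - t) atTop (𝓝 0) :=
    squeeze_zero_norm hb (tendsto_halfpow D)
  have := h0.add (tendsto_const_nhds (x := t))
  simpa using this

lemma geod_dist (h : HasMidpoints M) (a b : M) (hD : 0 < dist a b)
    {s t : ℝ} (hs : s ∈ Icc 0 (dist a b)) (ht : t ∈ Icc 0 (dist a b)) :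
    dist (geod h a b hD s) (geod h a b hD t) = |s - t| := by
  set D := dist a b with hDdef
  have h1 : Tendsto (fun n => dist (dseq h a b s n) (dseq h a b t n)) atTop
      (𝓝 (dist (geod h a b hD s) (geod h a b hD t))) :=
    (geod_tendsto h a b hD s).dist (geod_tendsto h a b hD t)
  have h2 : (fun n => dist (dseq h a b s n) (dseq h a b t n)) =
      fun n => |(kn D s n : ℝ) * (D / 2 ^ n) - (kn D t n : ℝ) * (D / 2 ^ n)| := by
    funext n
    have := grid_dist h a b hD hs ht n n
    have e1 : clamp (dist a b) s = s := clamp_eq hs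
    have e2 : clamp (dist a b) t = t := clamp_eq ht
    simpa [dseq, e1, e2] using this
  rw [h2] at h1
  have h3 : Tendsto (fun n : ℕ => |(kn D s n : ℝ) * (D / 2 ^ n) -
      (kn D t n : ℝ) * (D / 2 ^ n)|) atTop (𝓝 |s - t|) :=
    ((tendsto_kn hD hs).sub (tendsto_kn hD ht)).abs
  exact tendsto_nhds_unique h1 h3

lemma geod_zero (h : HasMidpoints M) (a b : M) (hD : 0 < dist a b) :
    geod h a b hD 0 = a := by
  have hseq : dseq h a b 0 = fun _ => a := by
    funext n
    have hc : clamp (dist a b) 0 = 0 := clamp_eq ⟨le_rfl, le_of_lt hD⟩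
    simp [dseq, hc, kn, grid_zero]
  have := geod_tendsto h a b hD 0
  rw [hseq] at this
  exact (tendsto_nhds_unique this tendsto_const_nhds).symm ▸ rfl

lemma geod_top (h : HasMidpoints M) (a b : M) (hD : 0 < dist a b) :
    geod h a b hD (dist a b) = b := by
  have hseq : dseq h a b (dist a b) = fun _ => b := by
    funext n
    have hc : clamp (dist a b) (dist a b) = dist a b := clamp_eq ⟨le_of_lt hD, le_rfl⟩
    have hk : kn (dist a b) (dist a b) n = 2 ^ n := by
      rw [kn, mul_comm, mul_div_assoc, div_self (ne_of_gt hD), mul_one]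
      rw [show ((2:ℝ) ^ n) = ((2 ^ n : ℕ) : ℝ) by push_cast; ring]
      exact Nat.floor_natCast _
    simp [dseq, hc, hk, grid_top]
  have := geod_tendsto h a b hD (dist a b)
  rw [hseq] at this
  exact tendsto_nhds_unique this tendsto_const_nhds

end MidGeo



namespace MGH

def Distinct (A : MarkedSpace) : Prop := ∀ i j : Fin 3, i ≠ j → A.pt i ≠ A.pt j

lemma ball_isOpen (A : MarkedSpace) {ε : ℝ} (hε : 0 < ε) :
    IsOpen {B : MarkedSpace | mghDist A B < ε} :=
  TopologicalSpace.GenerateOpen.basic _ ⟨A, ε, hε, rfl⟩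

lemma good_closed : IsClosed {B : MarkedSpace | GoodRep B} := by
  rw [← isOpen_compl_iff, isOpen_iff_forall_mem_open]
  intro B hB
  have H : ¬ ∀ ε : ℝ, 0 < ε → ∃ A, mghDist B A < ε ∧ GoodRep A := fun H =>
    hB (good_of_approx B H)
  push_neg at H
  obtain ⟨ε, hε, hA⟩ := H
  refine ⟨{B' | mghDist B B' < ε}, ?_, ball_isOpen B hε, ?_⟩
  · intro B' hB'
    exact hA B' hB'
  · show mghDist B B < ε
    rw [mghDist_self]; exact hε

lemma distinct_open : IsOpen {B : MarkedSpace | Distinct B} := by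
  rw [isOpen_iff_forall_mem_open]
  intro B hB
  have hpos : ∀ i j : Fin 3, i ≠ j → 0 < dist (B.pt i) (B.pt j) := fun i j hij =>
    dist_pos.2 (hB i j hij)
  obtain ⟨ε, hε, hsep⟩ : ∃ ε : ℝ, 0 < ε ∧ ∀ i j : Fin 3, i ≠ j →
      3 * ε ≤ dist (B.pt i) (B.pt j) := by
    set δ := min (min (dist (B.pt 0) (B.pt 1)) (dist (B.pt 0) (B.pt 2)))
      (dist (B.pt 1) (B.pt 2)) with hδ
    have h01 := hpos 0 1 (by decide)
    have h02 := hpos 0 2 (by decide)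
    have h12 := hpos 1 2 (by decide)
    have hδ0 : 0 < δ := lt_min (lt_min h01 h02) h12
    have l1 : δ ≤ dist (B.pt 0) (B.pt 1) := le_trans (min_le_left _ _) (min_le_left _ _)
    have l2 : δ ≤ dist (B.pt 0) (B.pt 2) := le_trans (min_le_left _ _) (min_le_right _ _)
    have l3 : δ ≤ dist (B.pt 1) (B.pt 2) := min_le_right _ _
    have l1' : δ ≤ dist (B.pt 1) (B.pt 0) := by rw [dist_comm]; exact l1
    have l2' : δ ≤ dist (B.pt 2) (B.pt 0) := by rw [dist_comm]; exact l2
    have l3' : δ ≤ dist (B.pt 2) (B.pt 1) := by rw [dist_comm]; exact l3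
    refine ⟨δ / 3, by linarith, ?_⟩
    intro i j hij
    clear hδ; clear_value δ
    fin_cases i <;> fin_cases j <;> simp_all <;> linarith
  refine ⟨{B' | mghDist B B' < ε}, ?_, ball_isOpen B hε, ?_⟩
  · intro B' hB'
    obtain ⟨r, hrmem, hrlt⟩ := exists_adm_lt B B' hB'
    obtain ⟨D⟩ := adm_of_mem hrmem
    intro i j hij heq
    have e := D.est (D.mark i) (D.mark j)
    rw [heq, dist_self] at e
    rw [abs_le] at e
    have := hsep i j hij
    linarith [e.2]
  · show mghDist B B < ε
    rw [mghDist_self]; exact hε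

def Inv (A B : MarkedSpace) : Prop :=
  (GoodRep A ↔ GoodRep B) ∧ ∀ i j : Fin 3, dist (A.pt i) (A.pt j) = dist (B.pt i) (B.pt j)

lemma inv_of_mk_eq {A B : MarkedSpace}
    (h : Quot.mk (fun A B : MarkedSpace => mghDist A B = 0) A = Quot.mk _ B) : Inv A B := by
  have h' := Quot.eq.1 h
  clear h
  induction h' with
  | rel x y hxy =>
    exact ⟨⟨fun hx => good_of_zero (by rw [mghDist_comm]; exact hxy) hx,
      fun hy => good_of_zero hxy hy⟩, fun i j => markdist_eq_of_zero hxy i j⟩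
  | refl x => exact ⟨Iff.rfl, fun _ _ => rfl⟩
  | symm x y _ ih => exact ⟨ih.1.symm, fun i j => (ih.2 i j).symm⟩
  | trans x y z _ _ ih1 ih2 =>
    exact ⟨ih1.1.trans ih2.1, fun i j => (ih1.2 i j).trans (ih2.2 i j)⟩

def Cq : Set MarkedGHSpace := {q | ∃ A, Quot.mk _ A = q ∧ GoodRep A}

def Uq : Set MarkedGHSpace := {q | ∃ A, Quot.mk _ A = q ∧ Distinct A}

lemma Cq_preimage :
    Quot.mk (fun A B : MarkedSpace => mghDist A B = 0) ⁻¹' Cq = {B | GoodRep B} := by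
  ext B
  constructor
  · rintro ⟨A, hmk, hA⟩
    exact (inv_of_mk_eq hmk).1.mp hA
  · intro hB
    exact ⟨B, rfl, hB⟩

lemma Uq_preimage :
    Quot.mk (fun A B : MarkedSpace => mghDist A B = 0) ⁻¹' Uq = {B | Distinct B} := by
  ext B
  constructor
  · rintro ⟨A, hmk, hA⟩
    intro i j hij heq
    have hd := (inv_of_mk_eq hmk).2 i j
    rw [heq, dist_self] at hd
    exact absurd (dist_eq_zero.mp hd) (hA i j hij)
  · intro hB
    exact ⟨B, rfl, hB⟩

lemma Cq_closed : IsClosed Cq := by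
  erw [← isOpen_compl_iff, isOpen_coinduced, preimage_compl, Cq_preimage]
  exact good_closed.isOpen_compl

lemma Uq_open : IsOpen Uq := by
  erw [isOpen_coinduced, Uq_preimage]
  exact distinct_open

end MGH

/-- A metric space is geodesic if any two points are joined by an isometrically
parametrized path. -/
def IsGeodesicSpace (M : Type*) [MetricSpace M] : Prop :=
  ∀ a b : M, ∃ γ : ℝ → M, γ 0 = a ∧ γ (dist a b) = b ∧
    ∀ s ∈ Icc (0 : ℝ) (dist a b), ∀ t ∈ Icc (0 : ℝ) (dist a b),
      dist (γ s) (γ t) = |s - t|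

theorem geodesic_of_hasMidpoints {M : Type*} [MetricSpace M] [CompactSpace M]
    (h : HasMidpoints M) : IsGeodesicSpace M := by
  intro a b
  rcases eq_or_lt_of_le (dist_nonneg : 0 ≤ dist a b) with hD | hD
  · have hab : a = b := dist_eq_zero.mp hD.symm
    refine ⟨fun _ => a, rfl, hab, ?_⟩
    intro s hs t ht
    rw [← hD] at hs ht
    have hs0 : s = 0 := le_antisymm hs.2 hs.1
    have ht0 : t = 0 := le_antisymm ht.2 ht.1
    simp [hs0, ht0]
  · haveI : CompleteSpace M := inferInstance
    exact ⟨MidGeo.geod h a b hD, MidGeo.geod_zero h a b hD, MidGeo.geod_top h a b hD,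
      fun s hs t ht => MidGeo.geod_dist h a b hD hs ht⟩

lemma hasMidpoints_of_geodesic {M : Type*} [MetricSpace M] (h : IsGeodesicSpace M) :
    HasMidpoints M := by
  intro a b
  obtain ⟨γ, h0, hDb, hiso⟩ := h a b
  set D := dist a b with hD
  have hD0 : 0 ≤ D := dist_nonneg
  refine ⟨γ (D / 2), ?_, ?_⟩
  · have := hiso 0 ⟨le_refl 0, hD0⟩ (D / 2) ⟨by linarith, by linarith⟩
    rw [h0] at this
    rw [this, zero_sub, abs_neg, abs_of_nonneg (by linarith)]
  · have := hiso (D / 2) ⟨by linarith, by linarith⟩ D ⟨hD0, le_refl D⟩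
    rw [hDb] at this
    rw [this, show D / 2 - D = -(D / 2) by ring, abs_neg, abs_of_nonneg (by linarith)]

theorem stmt13 :
    @MeasurableSet MarkedGHSpace (borel MarkedGHSpace)
      { q : MarkedGHSpace | ∃ A : MarkedSpace,
        Quot.mk _ A = q ∧
        IsGeodesicSpace A.X ∧
        (∀ i j : Fin 3, i ≠ j → A.pt i ≠ A.pt j) ∧
        ∃ w : A.X, ∀ i j : Fin 3, i ≠ j →
          dist (A.pt i) w + dist w (A.pt j) = dist (A.pt i) (A.pt j) } :=
  by
  classical
  have hS : { q : MarkedGHSpace | ∃ A : MarkedSpace,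
        Quot.mk _ A = q ∧
        IsGeodesicSpace A.X ∧
        (∀ i j : Fin 3, i ≠ j → A.pt i ≠ A.pt j) ∧
        ∃ w : A.X, ∀ i j : Fin 3, i ≠ j →
          dist (A.pt i) w + dist w (A.pt j) = dist (A.pt i) (A.pt j) } =
      MGH.Uq ∩ MGH.Cq := by
    ext q
    constructor
    · rintro ⟨A, hmk, hgeo, hdist, w, hw⟩
      exact ⟨⟨A, hmk, hdist⟩, ⟨A, hmk, hasMidpoints_of_geodesic hgeo, w, hw⟩⟩
    · rintro ⟨⟨B1, hmk1, hdist1⟩, ⟨A, hmkA, hmidA, w, hw⟩⟩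
      have hinv := MGH.inv_of_mk_eq (hmkA.trans hmk1.symm)
      refine ⟨A, hmkA, geodesic_of_hasMidpoints hmidA, ?_, w, hw⟩
      intro i j hij heq
      have hd := hinv.2 i j
      rw [heq, dist_self] at hd
      exact absurd (dist_eq_zero.mp hd.symm) (hdist1 i j hij)
  rw [hS]
  have hU : @MeasurableSet MarkedGHSpace (borel MarkedGHSpace) MGH.Uq :=
    MeasurableSpace.measurableSet_generateFrom MGH.Uq_open
  have hC : @MeasurableSet MarkedGHSpace (borel MarkedGHSpace) MGH.Cqᶜ :=
    MeasurableSpace.measurableSet_generateFrom MGH.Cq_closed.isOpen_compl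
  have := hU.inter hC.compl
  rwa [compl_compl] at this
end
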